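/- arXiv:2002.09898 — 11 statements merged into one kernel-verified Lean document; each statement's English description precedes it below -/
import Mathlib

section
/- Let n ≥ 1 and work in E = EuclideanSpace ℝ (Fin n). Let f, h : E → ℝ be differentiable, let σ, R_f, α > 0 with α·R_f ≤ 1. Assume h is σ-strongly convex (x ↦ h(x) − (σ/2)‖x‖² is convex) and f is R_f-relatively smooth with respect to h in the inequality sense: f(x) − f(y) − ⟪∇f(y), x − y⟫ ≤ R_f · D_h(x, y) for all x, y, where D_h(x, y) = h(x) − h(y) − ⟪∇h(y), x − y⟫. Let g : E → EReal be proper, lower semicontinuous and convex, and set E(x) = (f(x) : EReal) + g(x). Fix y ∈ E and suppose z ∈ E satisfies g(z) finite and, for all x ∈ E, g(z) + ⟪∇f(y), z − y⟫ + (1/α)·D_h(z, y) ≤ g(x) + ⟪∇f(y), x − y⟫ + (1/α)·D_h(x, y) (as an inequality in EReal). Then E(z) + ((1/α − R_f)·(σ/2)·‖z − y‖² : EReal) ≤ E(y). -/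
open RealInnerProductSpace

/-- The Bregman distance `D_h(x, y) = h(x) − h(y) − ⟪∇h(y), x − y⟫`. -/
noncomputable def bregman {n : ℕ} (h : EuclideanSpace ℝ (Fin n) → ℝ)
    (x y : EuclideanSpace ℝ (Fin n)) : ℝ :=
  h x - h y - ⟪gradient h y, x - y⟫

/-!
Strong convexity of `h` bounds the Bregman distance below: `σ/2 ‖z − y‖² ≤ D_h(z, y)`, by the
first-order inequality for the convex function `h − σ/2 ‖·‖²`. At `x = y` the minimality of `z`
gives `g(z) + ⟪∇f(y), z − y⟫ + D_h(z, y)/α ≤ g(y)`, and relative smoothness bounds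
`f(z) − f(y) − ⟪∇f(y), z − y⟫` by `R_f D_h(z, y)`. Since `1/α − R_f ≥ 0`, the remaining
`(1/α − R_f) D_h(z, y)` dominates `(1/α − R_f) σ/2 ‖z − y‖²`.
-/

theorem ConvexOn.apply_sub_le_of_hasFDerivAt {E : Type*} [NormedAddCommGroup E]
    [NormedSpace ℝ E] {φ : E → ℝ} {φ' : E →L[ℝ] ℝ} {y : E} (hφ : ConvexOn ℝ Set.univ φ)
    (hφ' : HasFDerivAt φ φ' y) (z : E) :
    φ' (z - y) ≤ φ z - φ y := by
  let ℓ : ℝ →ᵃ[ℝ] E := AffineMap.lineMap y z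
  have hline : HasDerivAt (φ ∘ ℓ) (φ' (z - y)) 0 :=
    hφ'.comp_hasDerivAt_of_eq 0 AffineMap.hasDerivAt_lineMap
      (AffineMap.lineMap_apply_zero y z).symm
  have hslope := (hφ.comp_affineMap ℓ).le_slope_of_hasDerivAt
    (Set.mem_univ 0) (Set.mem_univ 1) zero_lt_one hline
  simpa [ℓ, slope_def_field] using hslope

theorem StrongConvexOn.le_sub_sub_of_hasFDerivAt {E : Type*} [NormedAddCommGroup E]
    [InnerProductSpace ℝ E] {f : E → ℝ} {f' : E →L[ℝ] ℝ} {m : ℝ} {y : E}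
    (hf : StrongConvexOn Set.univ m f) (hf' : HasFDerivAt f f' y) (z : E) :
    m / 2 * ‖z - y‖ ^ 2 ≤ f z - f y - f' (z - y) := by
  have hderiv : HasFDerivAt (fun x => f x - m / 2 * ‖x‖ ^ 2)
      (f' - (m / 2) • (2 • innerSL ℝ y)) y :=
    hf'.sub ((hasStrictFDerivAt_norm_sq y).hasFDerivAt.const_mul (m / 2))
  have key := (strongConvexOn_iff_convex.mp hf).apply_sub_le_of_hasFDerivAt hderiv z
  have hnorm : ‖z - y‖ ^ 2 = ‖z‖ ^ 2 - ‖y‖ ^ 2 - 2 * ⟪y, z - y⟫ := by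
    rw [norm_sub_sq_real, inner_sub_right, real_inner_self_eq_norm_sq, real_inner_comm]
    ring
  simp only [sub_apply, smul_apply, innerSL_apply_apply,
    smul_eq_mul, nsmul_eq_mul, Nat.cast_ofNat] at key
  rw [hnorm]
  linarith

theorem sq_norm_sub_le_bregman {n : ℕ} {h : EuclideanSpace ℝ (Fin n) → ℝ} {σ : ℝ}
    (hh : StrongConvexOn Set.univ σ h) {y : EuclideanSpace ℝ (Fin n)}
    (hy : DifferentiableAt ℝ h y) (z : EuclideanSpace ℝ (Fin n)) :
    σ / 2 * ‖z - y‖ ^ 2 ≤ bregman h z y := by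
  have := hh.le_sub_sub_of_hasFDerivAt hy.hasFDerivAt z
  rwa [← toDual_gradient, InnerProductSpace.toDual_apply_apply] at this

theorem bregman_prox_sufficient_decrease_general
    (n : ℕ)
    (f h : EuclideanSpace ℝ (Fin n) → ℝ)
    (hh : Differentiable ℝ h)
    (σ Rf α : ℝ) (hα : 0 < α) (hαRf : α * Rf ≤ 1)
    (hstrong : ConvexOn ℝ Set.univ (fun x => h x - σ / 2 * ‖x‖ ^ 2))
    (hrel : ∀ x y : EuclideanSpace ℝ (Fin n),
      f x - f y - ⟪gradient f y, x - y⟫ ≤ Rf * bregman h x y)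
    (g : EuclideanSpace ℝ (Fin n) → EReal)
    (En : EuclideanSpace ℝ (Fin n) → EReal)
    (hEn : ∀ x, En x = (f x : EReal) + g x)
    (y z : EuclideanSpace ℝ (Fin n))
    (hmin : ∀ x : EuclideanSpace ℝ (Fin n),
      g z + ((⟪gradient f y, z - y⟫ + (1 / α) * bregman h z y : ℝ) : EReal) ≤
        g x + ((⟪gradient f y, x - y⟫ + (1 / α) * bregman h x y : ℝ) : EReal)) :
    En z + (((1 / α - Rf) * (σ / 2) * ‖z - y‖ ^ 2 : ℝ) : EReal) ≤ En y := by
  set c := ⟪gradient f y, z - y⟫ + (1 / α) * bregman h z y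
  have hbregman := sq_norm_sub_le_bregman (strongConvexOn_iff_convex.mpr hstrong) (hh y) z
  have hgap : 0 ≤ 1 / α - Rf := sub_nonneg.mpr (by rw [le_div_iff₀ hα]; linarith)
  have hreal : f z + (1 / α - Rf) * (σ / 2) * ‖z - y‖ ^ 2 ≤ f y + c := by
    linarith [hrel z y, mul_le_mul_of_nonneg_left hbregman hgap]
  have hstep : g z + (c : EReal) ≤ g y := by simpa [bregman] using hmin y
  rw [hEn, hEn]
  calc (f z : EReal) + g z + (((1 / α - Rf) * (σ / 2) * ‖z - y‖ ^ 2 : ℝ) : EReal)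
      = g z + ((f z + (1 / α - Rf) * (σ / 2) * ‖z - y‖ ^ 2 : ℝ) : EReal) := by
        rw [EReal.coe_add]; ac_rfl
    _ ≤ g z + ((f y + c : ℝ) : EReal) := by gcongr
    _ = f y + (g z + c) := by rw [EReal.coe_add]; ac_rfl
    _ ≤ f y + g y := by gcongr

/-- Sufficient decrease of the Bregman proximal step:
`E(z) + (1/α − R_f)·(σ/2)·‖z − y‖² ≤ E(y)`. -/
theorem bregman_prox_sufficient_decrease
    (n : ℕ) (hn : 1 ≤ n)
    (f h : EuclideanSpace ℝ (Fin n) → ℝ)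
    (hf : Differentiable ℝ f) (hh : Differentiable ℝ h)
    (σ Rf α : ℝ) (hσ : 0 < σ) (hRf : 0 < Rf) (hα : 0 < α) (hαRf : α * Rf ≤ 1)
    (hstrong : ConvexOn ℝ Set.univ (fun x => h x - σ / 2 * ‖x‖ ^ 2))
    (hrel : ∀ x y : EuclideanSpace ℝ (Fin n),
      f x - f y - ⟪gradient f y, x - y⟫ ≤ Rf * bregman h x y)
    (g : EuclideanSpace ℝ (Fin n) → EReal)
    (hg_bot : ∀ x, g x ≠ ⊥) (hg_proper : ∃ x, g x ≠ ⊤)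
    (hg_lsc : LowerSemicontinuous g)
    (hg_convex : ∀ x y : EuclideanSpace ℝ (Fin n), ∀ t : ℝ, 0 ≤ t → t ≤ 1 →
      g (t • x + (1 - t) • y) ≤ (t : EReal) * g x + ((1 - t : ℝ) : EReal) * g y)
    (En : EuclideanSpace ℝ (Fin n) → EReal)
    (hEn : ∀ x, En x = (f x : EReal) + g x)
    (y z : EuclideanSpace ℝ (Fin n)) (hz : g z ≠ ⊤)
    (hmin : ∀ x : EuclideanSpace ℝ (Fin n),
      g z + ((⟪gradient f y, z - y⟫ + (1 / α) * bregman h z y : ℝ) : EReal) ≤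
        g x + ((⟪gradient f y, x - y⟫ + (1 / α) * bregman h x y : ℝ) : EReal)) :
    En z + (((1 / α - Rf) * (σ / 2) * ‖z - y‖ ^ 2 : ℝ) : EReal) ≤ En y :=
  bregman_prox_sufficient_decrease_general n f h hh σ Rf α hα hαRf hstrong hrel g En hEn y z hmin
end

section
/- Let n ≥ 1 and work in E = EuclideanSpace ℝ (Fin n). Let f, h : E → ℝ be differentiable, σ, R_f > 0, h σ-strongly convex, and f R_f-relatively smooth with respect to h in the inequality sense: f(x) − f(y) − ⟪∇f(y), x − y⟫ ≤ R_f · D_h(x, y) for all x, y. Let g : E → EReal be proper, lower semicontinuous and convex, and set E(x) = (f(x) : EReal) + g(x). Let c, η > 0 and suppose 0 < α ≤ min(1/(2c/σ + R_f), 1/(2η/σ + R_f)). Fix y ∈ E and suppose z minimizes x ↦ g(x) + ⟪∇f(y), x − y⟫ + (1/α)·D_h(x, y) over E with g(z) finite. Then both E(z) + (c·‖z − y‖² : EReal) ≤ E(y) and E(z) + (η·‖z − y‖² : EReal) ≤ E(y). -/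
open RealInnerProductSpace

/-!
Testing the minimality of `z` at `x = y` gives
`g z + ⟪∇f y, z - y⟫ + D_h(z, y) / α ≤ g y`, and relative smoothness gives
`f z ≤ f y + ⟪∇f y, z - y⟫ + R_f D_h(z, y)`. Adding the two,
`E z + (1/α - R_f) D_h(z, y) ≤ E y`, and the step-size bound `1/α - R_f ≥ 2κ/σ` together with
`D_h(z, y) ≥ (σ/2) ‖z - y‖²` (strong convexity of `h`) turns the slack into `κ ‖z - y‖²`.
-/

theorem ConvexOn.add_le_of_hasFDerivAt {E : Type*} [NormedAddCommGroup E] [NormedSpace ℝ E]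
    {φ : E → ℝ} {φ' : E →L[ℝ] ℝ} {x y : E} (hφ : ConvexOn ℝ Set.univ φ)
    (hφ' : HasFDerivAt φ φ' y) : φ y + φ' (x - y) ≤ φ x := by
  have hline : ConvexOn ℝ Set.univ (φ ∘ AffineMap.lineMap (k := ℝ) y x) := by
    simpa using hφ.comp_affineMap (AffineMap.lineMap (k := ℝ) y x)
  have hderiv : HasDerivAt (φ ∘ AffineMap.lineMap (k := ℝ) y x) (φ' (x - y)) 0 := by
    refine HasFDerivAt.comp_hasDerivAt (𝕜 := ℝ) 0 ?_ AffineMap.hasDerivAt_lineMap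
    simpa using hφ'
  have hslope := hline.le_slope_of_hasDerivAt (Set.mem_univ 0) (Set.mem_univ 1) one_pos hderiv
  simp only [slope_def_field, Function.comp_apply, AffineMap.lineMap_apply_zero,
    AffineMap.lineMap_apply_one, sub_zero, div_one] at hslope
  linarith

section Bregman

variable {n : ℕ}

@[simp]
theorem bregman_self (h : EuclideanSpace ℝ (Fin n) → ℝ) (x : EuclideanSpace ℝ (Fin n)) :
    bregman h x x = 0 := by
  simp [bregman]

theorem mul_sq_norm_sub_le_bregman {h : EuclideanSpace ℝ (Fin n) → ℝ} {σ : ℝ}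
    (hh : Differentiable ℝ h) (hstrong : ConvexOn ℝ Set.univ (fun x => h x - σ / 2 * ‖x‖ ^ 2))
    (x y : EuclideanSpace ℝ (Fin n)) :
    σ / 2 * ‖x - y‖ ^ 2 ≤ bregman h x y := by
  have hh' : HasFDerivAt h (InnerProductSpace.toDual ℝ _ (gradient h y)) y :=
    hasGradientAt_iff_hasFDerivAt.mp (hh y).hasGradientAt
  have htangent := hstrong.add_le_of_hasFDerivAt (x := x)
    (hh'.sub (((hasStrictFDerivAt_norm_sq y).hasFDerivAt).const_mul (σ / 2)))
  simp only [sub_apply, smul_apply,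
    InnerProductSpace.toDual_apply_apply, innerSL_apply_apply, smul_eq_mul, nsmul_eq_mul,
    Nat.cast_ofNat] at htangent
  have hsq : ‖x - y‖ ^ 2 = ‖x‖ ^ 2 - ‖y‖ ^ 2 - 2 * ⟪y, x - y⟫ := by
    rw [norm_sub_sq_real, inner_sub_right, real_inner_self_eq_norm_sq, real_inner_comm]
    ring
  rw [bregman, hsq]
  linarith

end Bregman

section ProxStep

variable {n : ℕ} {f h : EuclideanSpace ℝ (Fin n) → ℝ} {σ Rf α κ : ℝ}
  {y z : EuclideanSpace ℝ (Fin n)}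

theorem add_mul_sq_norm_sub_le_of_prox_step (hσ : 0 < σ) (hRf : 0 < Rf) (hκ : 0 < κ)
    (hα0 : 0 < α) (hακ : α ≤ 1 / (2 * κ / σ + Rf))
    (hrel : f z - f y - ⟪gradient f y, z - y⟫ ≤ Rf * bregman h z y)
    (hD : σ / 2 * ‖z - y‖ ^ 2 ≤ bregman h z y) {a b : ℝ}
    (hprox : a + (⟪gradient f y, z - y⟫ + 1 / α * bregman h z y) ≤ b) :
    f z + a + κ * ‖z - y‖ ^ 2 ≤ f y + b := by
  have hstep : 2 * κ / σ + Rf ≤ 1 / α := (le_one_div hα0 (by positivity)).mp hακ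
  have hD0 : 0 ≤ bregman h z y := le_trans (by positivity) hD
  have hquad : κ * ‖z - y‖ ^ 2 ≤ 2 * κ / σ * bregman h z y :=
    calc κ * ‖z - y‖ ^ 2 = 2 * κ / σ * (σ / 2 * ‖z - y‖ ^ 2) := by field_simp
      _ ≤ 2 * κ / σ * bregman h z y := by gcongr
  have hslack : 2 * κ / σ * bregman h z y ≤ (1 / α - Rf) * bregman h z y :=
    mul_le_mul_of_nonneg_right (by linarith) hD0
  linarith

theorem coe_add_add_le_of_prox_step (hσ : 0 < σ) (hRf : 0 < Rf) (hκ : 0 < κ)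
    (hα0 : 0 < α) (hακ : α ≤ 1 / (2 * κ / σ + Rf))
    (hrel : f z - f y - ⟪gradient f y, z - y⟫ ≤ Rf * bregman h z y)
    (hD : σ / 2 * ‖z - y‖ ^ 2 ≤ bregman h z y) {u v : EReal}
    (hprox : u + ((⟪gradient f y, z - y⟫ + 1 / α * bregman h z y : ℝ) : EReal) ≤ v) :
    (f z : EReal) + u + ((κ * ‖z - y‖ ^ 2 : ℝ) : EReal) ≤ f y + v := by
  induction u using EReal.rec with
  | bot => simp
  | top =>
    rw [EReal.top_add_coe, top_le_iff] at hprox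
    simp [hprox]
  | coe a =>
    induction v using EReal.rec with
    | bot =>
      rw [← EReal.coe_add, le_bot_iff] at hprox
      exact absurd hprox (EReal.coe_ne_bot _)
    | top => simp
    | coe b =>
      norm_cast at hprox ⊢
      exact add_mul_sq_norm_sub_le_of_prox_step hσ hRf hκ hα0 hακ hrel hD hprox

end ProxStep

theorem bregman_prox_step_conditions_general
    (n : ℕ)
    (f h : EuclideanSpace ℝ (Fin n) → ℝ)
    (hh : Differentiable ℝ h)
    (σ Rf : ℝ) (hσ : 0 < σ) (hRf : 0 < Rf)
    (hstrong : ConvexOn ℝ Set.univ (fun x => h x - σ / 2 * ‖x‖ ^ 2))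
    (hrel : ∀ x y : EuclideanSpace ℝ (Fin n),
      f x - f y - ⟪gradient f y, x - y⟫ ≤ Rf * bregman h x y)
    (g : EuclideanSpace ℝ (Fin n) → EReal)
    (En : EuclideanSpace ℝ (Fin n) → EReal)
    (hEn : ∀ x, En x = (f x : EReal) + g x)
    (c η α : ℝ) (hc : 0 < c) (hη : 0 < η)
    (hα0 : 0 < α) (hα : α ≤ min (1 / (2 * c / σ + Rf)) (1 / (2 * η / σ + Rf)))
    (y z : EuclideanSpace ℝ (Fin n))
    (hmin : ∀ x : EuclideanSpace ℝ (Fin n),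
      g z + ((⟪gradient f y, z - y⟫ + (1 / α) * bregman h z y : ℝ) : EReal) ≤
        g x + ((⟪gradient f y, x - y⟫ + (1 / α) * bregman h x y : ℝ) : EReal)) :
    En z + ((c * ‖z - y‖ ^ 2 : ℝ) : EReal) ≤ En y ∧
      En z + ((η * ‖z - y‖ ^ 2 : ℝ) : EReal) ≤ En y := by
  have hprox := hmin y
  simp only [sub_self, inner_zero_right, bregman_self, mul_zero, add_zero, EReal.coe_zero]
    at hprox
  have hdecrease : ∀ κ, 0 < κ → α ≤ 1 / (2 * κ / σ + Rf) →
      En z + ((κ * ‖z - y‖ ^ 2 : ℝ) : EReal) ≤ En y := fun κ hκ hακ => by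
    rw [hEn, hEn]
    exact coe_add_add_le_of_prox_step hσ hRf hκ hα0 hακ (hrel z y)
      (mul_sq_norm_sub_le_bregman hh hstrong z y) hprox
  exact ⟨hdecrease c hc (hα.trans (min_le_left _ _)),
    hdecrease η hη (hα.trans (min_le_right _ _))⟩

/-- For step sizes `0 < α ≤ min(1/(2c/σ + R_f), 1/(2η/σ + R_f))`, the Bregman proximal
step satisfies both the non-restart condition and the line search condition. -/
theorem bregman_prox_step_conditions
    (n : ℕ) (hn : 1 ≤ n)
    (f h : EuclideanSpace ℝ (Fin n) → ℝ)
    (hf : Differentiable ℝ f) (hh : Differentiable ℝ h)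
    (σ Rf : ℝ) (hσ : 0 < σ) (hRf : 0 < Rf)
    (hstrong : ConvexOn ℝ Set.univ (fun x => h x - σ / 2 * ‖x‖ ^ 2))
    (hrel : ∀ x y : EuclideanSpace ℝ (Fin n),
      f x - f y - ⟪gradient f y, x - y⟫ ≤ Rf * bregman h x y)
    (g : EuclideanSpace ℝ (Fin n) → EReal)
    (hg_bot : ∀ x, g x ≠ ⊥) (hg_proper : ∃ x, g x ≠ ⊤)
    (hg_lsc : LowerSemicontinuous g)
    (hg_convex : ∀ x y : EuclideanSpace ℝ (Fin n), ∀ t : ℝ, 0 ≤ t → t ≤ 1 →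
      g (t • x + (1 - t) • y) ≤ (t : EReal) * g x + ((1 - t : ℝ) : EReal) * g y)
    (En : EuclideanSpace ℝ (Fin n) → EReal)
    (hEn : ∀ x, En x = (f x : EReal) + g x)
    (c η α : ℝ) (hc : 0 < c) (hη : 0 < η)
    (hα0 : 0 < α) (hα : α ≤ min (1 / (2 * c / σ + Rf)) (1 / (2 * η / σ + Rf)))
    (y z : EuclideanSpace ℝ (Fin n)) (hz : g z ≠ ⊤)
    (hmin : ∀ x : EuclideanSpace ℝ (Fin n),
      g z + ((⟪gradient f y, z - y⟫ + (1 / α) * bregman h z y : ℝ) : EReal) ≤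
        g x + ((⟪gradient f y, x - y⟫ + (1 / α) * bregman h x y : ℝ) : EReal)) :
    En z + ((c * ‖z - y‖ ^ 2 : ℝ) : EReal) ≤ En y ∧
      En z + ((η * ‖z - y‖ ^ 2 : ℝ) : EReal) ≤ En y :=
  bregman_prox_step_conditions_general n f h hh σ Rf hσ hRf hstrong hrel g En hEn c η α hc hη hα0 hα
    y z hmin
end

section
/- Let n ≥ 1 and work in E = EuclideanSpace ℝ (Fin n). Let f, h : E → ℝ be differentiable with h convex, and let g : E → EReal be proper, lower semicontinuous and convex. Let ρ_f, ρ_h > 0, α ≥ α_min > 0, w ∈ [0, w̄] with w̄ ≥ 0. Let x⁻, x ∈ E, set y = x + w•(x − x⁻), and suppose x⁺ satisfies g(x⁺) finite and minimizes u ↦ g(u) + ⟪∇f(y), u − y⟫ + (1/α)·D_h(u, y) over E. Assume ‖∇f(x⁺) − ∇f(y)‖ ≤ ρ_f·‖x⁺ − y‖ and ‖∇h(x⁺) − ∇h(y)‖ ≤ ρ_h·‖x⁺ − y‖. Then there exists u ∈ ∂g(x⁺) such that ‖∇f(x⁺) + u‖ ≤ (ρ_f + ρ_h/α_min)·(‖x⁺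 − x‖ + w̄·‖x − x⁻‖). -/
/-!
At the minimizer `x⁺` of `g + φ`, with `φ(u) = ⟪∇f(y), u − y⟫ + D_h(u, y)/α` differentiable, convexity
of `g` along each segment `[x⁺, v]` turns minimality into the first-order condition
`−∇φ(x⁺) = −∇f(y) − (∇h(x⁺) − ∇h(y))/α ∈ ∂g(x⁺)`. Adding `∇f(x⁺)` to this subgradient leaves the two
gradient increments between `y` and `x⁺`, bounded by the local Lipschitz hypotheses, and
`‖x⁺ − y‖ ≤ ‖x⁺ − x‖ + w̄‖x − x⁻‖` since `y` is the extrapolated point.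
-/

open RealInnerProductSpace

theorem nonneg_of_hasDerivAt_of_isMinOn_Icc {ψ : ℝ → ℝ} {s : ℝ} (hψ : HasDerivAt ψ s 0)
    (hmin : IsMinOn ψ (Set.Icc 0 1) 0) : 0 ≤ s := by
  have h1 : (1 : ℝ) ∈ posTangentConeAt (Set.Icc (0 : ℝ) 1) 0 :=
    mem_posTangentConeAt_of_segment_subset (by simp [segment_eq_Icc])
  simpa using hmin.localize.hasFDerivWithinAt_nonneg hψ.hasFDerivAt.hasFDerivWithinAt h1

section Subgradient

variable {E : Type*} [NormedAddCommGroup E] [InnerProductSpace ℝ E]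

/-- `u ∈ ∂g(x)`. -/
def IsSubgradient (g : E → EReal) (x u : E) : Prop :=
  ∀ v, g x + ((⟪u, v - x⟫ : ℝ) : EReal) ≤ g v

variable [CompleteSpace E]

theorem isSubgradient_neg_of_isMinOn_add {g : E → EReal} {φ : E → ℝ} {x φ' : E}
    (hg_bot : ∀ z, g z ≠ ⊥)
    (hg_convex : ∀ a b : E, ∀ t : ℝ, 0 ≤ t → t ≤ 1 →
      g (t • a + (1 - t) • b) ≤ (t : EReal) * g a + ((1 - t : ℝ) : EReal) * g b)
    (hx : g x ≠ ⊤) (hφ : HasGradientAt φ φ' x)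
    (hmin : IsMinOn (fun u => g u + (φ u : EReal)) Set.univ x) :
    IsSubgradient g x (-φ') := by
  intro v
  rcases eq_or_ne (g v) ⊤ with hv | hv
  · simp [hv]
  lift g x to ℝ using ⟨hx, hg_bot x⟩ with A hA
  lift g v to ℝ using ⟨hv, hg_bot v⟩ with B hB
  set d := v - x
  have hmin_segment : ∀ t ∈ Set.Icc (0 : ℝ) 1,
      A + φ x ≤ t * B + (1 - t) * A + φ (x + t • d) := by
    rintro t ⟨ht0, ht1⟩
    have hconv := hg_convex v x t ht0 ht1
    rw [show t • v + (1 - t) • x = x + t • d by module, ← hA, ← hB] at hconv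
    have hmin_t := isMinOn_univ_iff.mp hmin (x + t • d)
    rw [← hA] at hmin_t
    have hE : ((A + φ x : ℝ) : EReal) ≤ ((t * B + (1 - t) * A + φ (x + t • d) : ℝ) : EReal) := by
      push_cast
      exact hmin_t.trans (add_le_add_left hconv _)
    exact_mod_cast hE
  have hdir : HasDerivAt (fun t : ℝ => φ (x + t • d)) ⟪φ', d⟫ 0 := by
    simpa [HasLineDerivAt] using hφ.hasFDerivAt.hasLineDerivAt d
  have hslope : 0 ≤ ⟪φ', d⟫ + (B - A) := by
    refine nonneg_of_hasDerivAt_of_isMinOn_Icc (ψ := fun t => φ (x + t • d) - φ x + t * (B - A))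
      (by simpa using (hdir.sub_const (φ x)).fun_add ((hasDerivAt_id' 0).mul_const (B - A)))
      fun t ht => ?_
    have := hmin_segment t ht
    simp only [Set.mem_ofPred_eq, zero_smul, add_zero, sub_self, zero_mul]
    linarith
  rw [inner_neg_left]
  exact_mod_cast (by linarith : A + -⟪φ', d⟫ ≤ B)

theorem hasGradientAt_inner_sub (a y x : E) : HasGradientAt (fun u => ⟪a, u - y⟫) a x := by
  rw [hasGradientAt_iff_hasFDerivAt]
  exact (InnerProductSpace.toDual ℝ E a).hasFDerivAt.comp x ((hasFDerivAt_id x).sub_const y)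

end Subgradient

section Bregman

variable {n : ℕ} {h : EuclideanSpace ℝ (Fin n) → ℝ} {x y : EuclideanSpace ℝ (Fin n)}

theorem hasGradientAt_bregman (hx : DifferentiableAt ℝ h x) :
    HasGradientAt (fun u => bregman h u y) (gradient h x - gradient h y) x := by
  rw [hasGradientAt_iff_hasFDerivAt, map_sub]
  exact (hx.hasGradientAt.hasFDerivAt.sub_const (h y)).sub
    (hasGradientAt_inner_sub (gradient h y) y x).hasFDerivAt

theorem hasGradientAt_inner_sub_add_bregman (a : EuclideanSpace ℝ (Fin n)) (c : ℝ)
    (hx : DifferentiableAt ℝ h x) :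
    HasGradientAt (fun u => ⟪a, u - y⟫ + c * bregman h u y)
      (a + c • (gradient h x - gradient h y)) x := by
  rw [hasGradientAt_iff_hasFDerivAt, map_add, map_smul]
  exact (hasGradientAt_inner_sub a y x).hasFDerivAt.add
    ((hasGradientAt_bregman hx).hasFDerivAt.const_mul c)

end Bregman

section Estimates

variable {F : Type*} [SeminormedAddCommGroup F] [NormedSpace ℝ F]

theorem norm_sub_extrapolate_le {z x x' : F} {w wbar : ℝ} (hw : w ∈ Set.Icc 0 wbar) :
    ‖z - (x + w • (x - x'))‖ ≤ ‖z - x‖ + wbar * ‖x - x'‖ :=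
  calc ‖z - (x + w • (x - x'))‖ = ‖(z - x) - w • (x - x')‖ := by rw [sub_add_eq_sub_sub]
    _ ≤ ‖z - x‖ + ‖w • (x - x')‖ := norm_sub_le _ _
    _ = ‖z - x‖ + w * ‖x - x'‖ := by rw [norm_smul, Real.norm_of_nonneg hw.1]
    _ ≤ ‖z - x‖ + wbar * ‖x - x'‖ := by gcongr; exact hw.2

theorem norm_sub_one_div_smul_le {a b : F} {α αmin ρa ρb r : ℝ} (hαmin : 0 < αmin)
    (hα : αmin ≤ α) (hρb : 0 ≤ ρb) (ha : ‖a‖ ≤ ρa * r) (hb : ‖b‖ ≤ ρb * r) (hr : 0 ≤ r) :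
    ‖a - (1 / α) • b‖ ≤ (ρa + ρb / αmin) * r := by
  have hα₀ : 0 < α := hαmin.trans_le hα
  calc ‖a - (1 / α) • b‖ ≤ ‖a‖ + ‖(1 / α) • b‖ := norm_sub_le _ _
    _ = ‖a‖ + (1 / α) * ‖b‖ := by rw [norm_smul, Real.norm_of_nonneg (by positivity)]
    _ ≤ ρa * r + (1 / α) * (ρb * r) := by gcongr
    _ = (ρa + ρb / α) * r := by ring
    _ ≤ (ρa + ρb / αmin) * r := by gcongr

end Estimates

theorem aabpg_subgradient_bound_general
    (n : ℕ)
    (f h : EuclideanSpace ℝ (Fin n) → ℝ)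
    (hh : Differentiable ℝ h)
    (g : EuclideanSpace ℝ (Fin n) → EReal)
    (hg_bot : ∀ x, g x ≠ ⊥)
    (hg_convex : ∀ x y : EuclideanSpace ℝ (Fin n), ∀ t : ℝ, 0 ≤ t → t ≤ 1 →
      g (t • x + (1 - t) • y) ≤ (t : EReal) * g x + ((1 - t : ℝ) : EReal) * g y)
    (ρf ρh α αmin w wbar : ℝ)
    (hρf : 0 < ρf) (hρh : 0 < ρh)
    (hαmin : 0 < αmin) (hααmin : αmin ≤ α)
    (hw : w ∈ Set.Icc 0 wbar)
    (xm x xp y : EuclideanSpace ℝ (Fin n))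
    (hy : y = x + w • (x - xm))
    (hfin : g xp ≠ ⊤)
    (hmin : ∀ u : EuclideanSpace ℝ (Fin n),
      g xp + ((⟪gradient f y, xp - y⟫ + (1 / α) * bregman h xp y : ℝ) : EReal) ≤
        g u + ((⟪gradient f y, u - y⟫ + (1 / α) * bregman h u y : ℝ) : EReal))
    (hlipf : ‖gradient f xp - gradient f y‖ ≤ ρf * ‖xp - y‖)
    (hliph : ‖gradient h xp - gradient h y‖ ≤ ρh * ‖xp - y‖) :
    ∃ u : EuclideanSpace ℝ (Fin n),
      (∀ v : EuclideanSpace ℝ (Fin n), g xp + ((⟪u, v - xp⟫ : ℝ) : EReal) ≤ g v) ∧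
      ‖gradient f xp + u‖ ≤ (ρf + ρh / αmin) * (‖xp - x‖ + wbar * ‖x - xm‖) := by
  refine ⟨-(gradient f y + (1 / α) • (gradient h xp - gradient h y)), ?_, ?_⟩
  · exact isSubgradient_neg_of_isMinOn_add hg_bot hg_convex hfin
      (hasGradientAt_inner_sub_add_bregman _ _ (hh xp)) (isMinOn_univ_iff.mpr hmin)
  · have hresidual : gradient f xp + -(gradient f y + (1 / α) • (gradient h xp - gradient h y))
        = (gradient f xp - gradient f y) - (1 / α) • (gradient h xp - gradient h y) := by abel
    calc ‖gradient f xp + -(gradient f y + (1 / α) • (gradient h xp - gradient h y))‖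
        ≤ (ρf + ρh / αmin) * ‖xp - y‖ := by
          rw [hresidual]
          exact norm_sub_one_div_smul_le hαmin hααmin hρh.le hlipf hliph (norm_nonneg _)
      _ ≤ (ρf + ρh / αmin) * (‖xp - x‖ + wbar * ‖x - xm‖) := by
          gcongr
          rw [hy]
          exact norm_sub_extrapolate_le hw

/-- Bound on the subgradient after one extrapolated Bregman proximal step:
there exists `u ∈ ∂g(x⁺)` with `‖∇f(x⁺) + u‖ ≤ (ρ_f + ρ_h/α_min)(‖x⁺ − x‖ + w̄‖x − x⁻‖)`. -/
theorem aabpg_subgradient_bound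
    (n : ℕ) (hn : 1 ≤ n)
    (f h : EuclideanSpace ℝ (Fin n) → ℝ)
    (hf : Differentiable ℝ f) (hh : Differentiable ℝ h)
    (hconv : ConvexOn ℝ Set.univ h)
    (g : EuclideanSpace ℝ (Fin n) → EReal)
    (hg_bot : ∀ x, g x ≠ ⊥) (hg_proper : ∃ x, g x ≠ ⊤)
    (hg_lsc : LowerSemicontinuous g)
    (hg_convex : ∀ x y : EuclideanSpace ℝ (Fin n), ∀ t : ℝ, 0 ≤ t → t ≤ 1 →
      g (t • x + (1 - t) • y) ≤ (t : EReal) * g x + ((1 - t : ℝ) : EReal) * g y)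
    (ρf ρh α αmin w wbar : ℝ)
    (hρf : 0 < ρf) (hρh : 0 < ρh)
    (hαmin : 0 < αmin) (hααmin : αmin ≤ α)
    (hwbar : 0 ≤ wbar) (hw : w ∈ Set.Icc 0 wbar)
    (xm x xp y : EuclideanSpace ℝ (Fin n))
    (hy : y = x + w • (x - xm))
    (hfin : g xp ≠ ⊤)
    (hmin : ∀ u : EuclideanSpace ℝ (Fin n),
      g xp + ((⟪gradient f y, xp - y⟫ + (1 / α) * bregman h xp y : ℝ) : EReal) ≤
        g u + ((⟪gradient f y, u - y⟫ + (1 / α) * bregman h u y : ℝ) : EReal))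
    (hlipf : ‖gradient f xp - gradient f y‖ ≤ ρf * ‖xp - y‖)
    (hliph : ‖gradient h xp - gradient h y‖ ≤ ρh * ‖xp - y‖) :
    ∃ u : EuclideanSpace ℝ (Fin n),
      (∀ v : EuclideanSpace ℝ (Fin n), g xp + ((⟪u, v - xp⟫ : ℝ) : EReal) ≤ g v) ∧
      ‖gradient f xp + u‖ ≤ (ρf + ρh / αmin) * (‖xp - x‖ + wbar * ‖x - xm‖) :=
  aabpg_subgradient_bound_general n f h hh g hg_bot hg_convex ρf ρh α αmin w wbar hρf hρh hαmin
    hααmin hw xm x xp y hy hfin hmin hlipf hliph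
end

section
/- Let n ≥ 1 and work in E = EuclideanSpace ℝ (Fin n). Let f, h : E → ℝ be twice continuously differentiable with h σ-strongly convex (σ > 0), and f R_f-relatively smooth with respect to h in the inequality sense: f(x) − f(y) − ⟪∇f(y), x − y⟫ ≤ R_f · D_h(x, y) for all x, y. Let g : E → EReal be proper, lower semicontinuous and convex, set E(x) = (f(x) : EReal) + g(x), and assume E is bounded below. Let c₀ > 0, w̄ ≥ 0, 0 < α_min ≤ α_max. Let (x^k)_{k ≥ 0} (with x^1 = x^0, E(x^0) finite), (w_k) with w_k ∈ [0, w̄], and (α_k) with α_k ∈ [α_min, α_max] be sequences such that for every k ≥ 1: y^k = x^k + w_k•(x^k − x^{k−1}), x^{k+1} has g(x^{k+1}) finite and minimizes u ↦ g(u) + ⟪∇f(y^k), u − y^k⟫ + (1/α_k)·D_h(u, y^k) over E, and E(x^k) and E(x^{k+1}) are finite reals with E(x^k) − E(x^{k+1}) ≥ c₀·‖x^k − x^{k+1}‖². Assume furthermore that the sublevel set {x : E(x) ≤ E(x^0)} is bounded. Then for every cluster point x* of the sequence (x^k), one has −∇f(x*) ∈ ∂g(x*), i.e. 0 ∈ ∂(f+g)(x*).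 -/
/-!
The sufficient-decrease inequality and the lower bound on the energy force `x k - x (k + 1) → 0`,
so along the subsequence both `x (φ j + 1)` and the extrapolated points `y (φ j)` converge to `x*`.
The optimality condition of the Bregman proximal step says that
`-∇f (y k) - (1 / α k) • (∇h (x (k + 1)) - ∇h (y k))` is a subgradient of `g` at `x (k + 1)`.
These subgradients tend to `-∇f x*`, since the gradients are continuous and `1 / α k` is bounded,
and lower semicontinuity of `g` carries the subgradient inequality over to the limit.
-/

open RealInnerProductSpace

open Filter Topology InnerProductSpace

section Sequences

variable {G : Type*} [SeminormedAddCommGroup G]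

theorem tendsto_sub_succ_of_sufficient_decrease {a : ℕ → ℝ} {x : ℕ → G} {c : ℝ} (hc : 0 < c)
    (ha : BddBelow (Set.range a)) (hdec : ∀ k, c * ‖x k - x (k + 1)‖ ^ 2 ≤ a k - a (k + 1)) :
    Tendsto (fun k => x k - x (k + 1)) atTop (𝓝 0) := by
  have hanti : Antitone a := antitone_nat_of_succ_le fun k =>
    sub_nonneg.1 ((by positivity : 0 ≤ c * ‖x k - x (k + 1)‖ ^ 2).trans (hdec k))
  have hlim := tendsto_atTop_ciInf hanti ha
  have hgap : Tendsto (fun k => (a k - a (k + 1)) / c) atTop (𝓝 0) := by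
    simpa using (hlim.sub (hlim.comp (tendsto_add_atTop_nat 1))).div_const c
  have hsq : Tendsto (fun k => ‖x k - x (k + 1)‖ ^ 2) atTop (𝓝 0) :=
    squeeze_zero (fun k => by positivity) (fun k => (le_div_iff₀' hc).2 (hdec k)) hgap
  rw [tendsto_zero_iff_norm_tendsto_zero]
  simpa [Real.sqrt_sq (norm_nonneg _)] using hsq.sqrt

theorem tendsto_extrapolation_sub [NormedSpace ℝ G] {x y : ℕ → G} {w : ℕ → ℝ} {W : ℝ}
    (hw : ∀ k, |w k| ≤ W) (hy : ∀ k ≥ 1, y k = x k + w k • (x k - x (k - 1)))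
    (hx : Tendsto (fun k => x k - x (k + 1)) atTop (𝓝 0)) :
    Tendsto (fun k => y k - x k) atTop (𝓝 0) := by
  have hprev : Tendsto (fun k => x k - x (k - 1)) atTop (𝓝 0) := by
    have hback : Tendsto (fun k => x (k - 1 + 1) - x (k - 1)) atTop (𝓝 0) := by
      simpa using (hx.comp (tendsto_sub_atTop_nat 1)).neg
    refine hback.congr' ?_
    filter_upwards [eventually_ge_atTop 1] with k hk
    simp [Nat.sub_add_cancel hk]
  have hwb : IsBoundedUnder (· ≤ ·) atTop (norm ∘ w) :=
    isBoundedUnder_of ⟨W, fun k => (Real.norm_eq_abs _).trans_le (hw k)⟩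
  refine (hwb.smul_tendsto_zero hprev).congr' ?_
  filter_upwards [eventually_ge_atTop 1] with k hk
  simp [hy k hk]

end Sequences

section Subgradient

variable {F : Type*} [NormedAddCommGroup F] [InnerProductSpace ℝ F]

theorem subgradient_ineq_of_tendsto {ι : Type*} {l : Filter ι} [l.NeBot] {g : F → EReal}
    (hg : LowerSemicontinuous g) {z p : ι → F} {z₀ p₀ u : F}
    (hz : Tendsto z l (𝓝 z₀)) (hp : Tendsto p l (𝓝 p₀))
    (hsub : ∀ᶠ i in l, g (z i) + ((⟪p i, u - z i⟫ : ℝ) : EReal) ≤ g u) :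
    g z₀ + ((⟪p₀, u - z₀⟫ : ℝ) : EReal) ≤ g u := by
  set r₀ := ⟪p₀, u - z₀⟫
  have hr : Tendsto (fun i => ⟪p i, u - z i⟫) l (𝓝 r₀) := hp.inner (tendsto_const_nhds.sub hz)
  by_contra! hlt
  have hgap : g u + ((-r₀ : ℝ) : EReal) < g z₀ := by
    have := EReal.add_lt_add_right_coe hlt (-r₀)
    rwa [add_assoc, ← EReal.coe_add, add_neg_cancel, EReal.coe_zero, add_zero] at this
  obtain ⟨c, hcu, hcz⟩ := EReal.exists_between_coe_real hgap
  have hev : ∀ᶠ i in l, ((c + ⟪p i, u - z i⟫ : ℝ) : EReal) ≤ g u := by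
    filter_upwards [hz.eventually (hg z₀ c hcz), hsub] with i hci hi
    exact (EReal.add_lt_add_right_coe hci _).le.trans hi
  have hle : ((c + r₀ : ℝ) : EReal) ≤ g u :=
    le_of_tendsto ((continuous_coe_real_ereal.tendsto _).comp (tendsto_const_nhds.add hr)) hev
  have := add_le_add_left hle ((-r₀ : ℝ) : EReal)
  rw [← EReal.coe_add, add_neg_cancel_right] at this
  exact this.not_gt hcu

variable [CompleteSpace F]

theorem ContDiff.continuous_gradient {f : F → ℝ} (hf : ContDiff ℝ 1 f) :
    Continuous (gradient f) :=
  (toDual ℝ F).symm.continuous.comp (hf.continuous_fderiv one_ne_zero)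

theorem subgradient_of_minimizes_add {g : F → EReal} (hg_bot : ∀ x, g x ≠ ⊥)
    (hg_convex : ∀ x y : F, ∀ t : ℝ, 0 ≤ t → t ≤ 1 →
      g (t • x + (1 - t) • y) ≤ (t : EReal) * g x + ((1 - t : ℝ) : EReal) * g y)
    {ψ : F → ℝ} {p z : F} (hψ : HasGradientAt ψ p z) (hz : g z ≠ ⊤)
    (hmin : ∀ u, g z + (ψ z : EReal) ≤ g u + (ψ u : EReal)) (u : F) :
    g z + ((⟪-p, u - z⟫ : ℝ) : EReal) ≤ g u := by
  rcases eq_or_ne (g u) ⊤ with hu | hu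
  · simp [hu]
  set Gz := (g z).toReal
  set Gu := (g u).toReal
  have hGz : g z = Gz := (EReal.coe_toReal hz (hg_bot z)).symm
  have hGu : g u = Gu := (EReal.coe_toReal hu (hg_bot u)).symm
  -- Minimality of `z` against the point `z + t • (u - z)` of the segment, plus convexity of `g`.
  have hslope : ∀ t ∈ Set.Ioo (0 : ℝ) 1, Gz - Gu ≤ t⁻¹ • (ψ (z + t • (u - z)) - ψ z) := by
    intro t ht
    have hzt : z + t • (u - z) = t • u + (1 - t) • z := by
      rw [smul_sub, sub_smul, one_smul]; abel
    have hle : ((Gz + ψ z : ℝ) : EReal) ≤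
        ((t * Gu + (1 - t) * Gz + ψ (z + t • (u - z)) : ℝ) : EReal) :=
      calc ((Gz + ψ z : ℝ) : EReal) = g z + (ψ z : EReal) := by rw [hGz, EReal.coe_add]
        _ ≤ g (z + t • (u - z)) + (ψ (z + t • (u - z)) : EReal) := hmin _
        _ ≤ (t : EReal) * g u + ((1 - t : ℝ) : EReal) * g z +
            (ψ (z + t • (u - z)) : EReal) := by
          rw [hzt]; gcongr; exact hg_convex u z t ht.1.le ht.2.le
        _ = ((t * Gu + (1 - t) * Gz + ψ (z + t • (u - z)) : ℝ) : EReal) := by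
          rw [hGu, hGz]; norm_cast
    rw [EReal.coe_le_coe_iff] at hle
    rw [smul_eq_mul, le_inv_mul_iff₀ ht.1]
    linarith
  have hderiv : Tendsto (fun t : ℝ => t⁻¹ • (ψ (z + t • (u - z)) - ψ z)) (𝓝[>] 0)
      (𝓝 ⟪p, u - z⟫) := by
    simpa using (hψ.hasFDerivAt.hasLineDerivAt (u - z)).tendsto_slope_zero_right
  have hdir : Gz - Gu ≤ ⟪p, u - z⟫ := by
    refine ge_of_tendsto hderiv ?_
    filter_upwards [Ioo_mem_nhdsGT one_pos] with t ht using hslope t ht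
  rw [hGz, hGu, ← EReal.coe_add, EReal.coe_le_coe_iff, inner_neg_left]
  linarith

end Subgradient

section Bregman

variable {n : ℕ}

local notation "E" => EuclideanSpace ℝ (Fin n)

theorem hasGradientAt_bregman_step {h : E → ℝ} {a y z : E} (c : ℝ)
    (hz : DifferentiableAt ℝ h z) :
    HasGradientAt (fun u => ⟪a, u - y⟫ + c * bregman h u y)
      (a + c • (gradient h z - gradient h y)) z := by
  have hlin : ∀ b : E, HasFDerivAt (fun u => ⟪b, u - y⟫) (toDual ℝ E b) z := fun b =>
    (toDual ℝ E b).hasFDerivAt.comp z ((hasFDerivAt_id z).sub_const y)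
  have hD := (hlin a).add
    (((hz.hasGradientAt.hasFDerivAt.sub_const (h y)).sub (hlin (gradient h y))).const_smul c)
  rw [hasGradientAt_iff_hasFDerivAt, map_add, map_smul, map_sub]
  exact hD

theorem subgradient_of_bregman_step {h : E → ℝ} {g : E → EReal} (hg_bot : ∀ x, g x ≠ ⊥)
    (hg_convex : ∀ x y : E, ∀ t : ℝ, 0 ≤ t → t ≤ 1 →
      g (t • x + (1 - t) • y) ≤ (t : EReal) * g x + ((1 - t : ℝ) : EReal) * g y)
    {a y z : E} {c : ℝ} (hz : DifferentiableAt ℝ h z) (hgz : g z ≠ ⊤)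
    (hmin : ∀ u, g z + ((⟪a, z - y⟫ + c * bregman h z y : ℝ) : EReal) ≤
      g u + ((⟪a, u - y⟫ + c * bregman h u y : ℝ) : EReal)) (u : E) :
    g z + ((⟪-a - c • (gradient h z - gradient h y), u - z⟫ : ℝ) : EReal) ≤ g u := by
  simpa only [neg_add'] using subgradient_of_minimizes_add hg_bot hg_convex
    (hasGradientAt_bregman_step c hz) hgz hmin u

end Bregman

theorem aabpg_cluster_point_stationary_general
    (n : ℕ)
    (f h : EuclideanSpace ℝ (Fin n) → ℝ)
    (hf : ContDiff ℝ 2 f) (hh : ContDiff ℝ 2 h)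
    (g : EuclideanSpace ℝ (Fin n) → EReal)
    (hg_bot : ∀ x, g x ≠ ⊥) (hg_proper : ∃ x, g x ≠ ⊤)
    (hg_lsc : LowerSemicontinuous g)
    (hg_convex : ∀ x y : EuclideanSpace ℝ (Fin n), ∀ t : ℝ, 0 ≤ t → t ≤ 1 →
      g (t • x + (1 - t) • y) ≤ (t : EReal) * g x + ((1 - t : ℝ) : EReal) * g y)
    (En : EuclideanSpace ℝ (Fin n) → EReal)
    (hbdd : ∃ m : ℝ, ∀ x, (m : EReal) ≤ En x)
    (c₀ wbar αmin αmax : ℝ)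
    (hc₀ : 0 < c₀) (hαmin : 0 < αmin)
    (x y : ℕ → EuclideanSpace ℝ (Fin n)) (w α : ℕ → ℝ)
    (hw : ∀ k, w k ∈ Set.Icc 0 wbar) (hα : ∀ k, α k ∈ Set.Icc αmin αmax)
    (hy : ∀ k ≥ 1, y k = x k + w k • (x k - x (k - 1)))
    (hgfin : ∀ k ≥ 1, g (x (k + 1)) ≠ ⊤)
    (hmin : ∀ k ≥ 1, ∀ u : EuclideanSpace ℝ (Fin n),
      g (x (k + 1)) +
        ((⟪gradient f (y k), x (k + 1) - y k⟫ +
          (1 / α k) * bregman h (x (k + 1)) (y k) : ℝ) : EReal) ≤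
      g u + ((⟪gradient f (y k), u - y k⟫ + (1 / α k) * bregman h u (y k) : ℝ) : EReal))
    (hdec : ∀ k ≥ 1, ∃ Ek Ek1 : ℝ, En (x k) = (Ek : EReal) ∧ En (x (k + 1)) = (Ek1 : EReal) ∧
      Ek - Ek1 ≥ c₀ * ‖x k - x (k + 1)‖ ^ 2)
    (xstar : EuclideanSpace ℝ (Fin n)) (φ : ℕ → ℕ) (hφ : StrictMono φ)
    (hlim : Filter.Tendsto (fun k => x (φ k)) Filter.atTop (nhds xstar)) :
    g xstar ≠ ⊤ ∧
      ∀ v : EuclideanSpace ℝ (Fin n),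
        g xstar + ((⟪-gradient f xstar, v - xstar⟫ : ℝ) : EReal) ≤ g v := by
  obtain ⟨m, hm⟩ := hbdd
  have hEn : ∀ k ≥ 1, En (x k) = ((En (x k)).toReal : EReal) := fun k hk => by
    obtain ⟨Ek, -, hEk, -⟩ := hdec k hk
    simp [hEk]
  have hsteps : Tendsto (fun k => x k - x (k + 1)) atTop (𝓝 0) := by
    refine (tendsto_add_atTop_iff_nat 1).1 (tendsto_sub_succ_of_sufficient_decrease
      (a := fun k => (En (x (k + 1))).toReal) hc₀ ⟨m, ?_⟩ fun k => ?_)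
    · rintro _ ⟨k, rfl⟩
      exact EReal.coe_le_coe_iff.1 ((hm _).trans_eq (hEn (k + 1) k.succ_pos))
    · obtain ⟨Ek, Ek1, hEk, hEk1, hgap⟩ := hdec (k + 1) k.succ_pos
      simp only [hEk, hEk1, EReal.toReal_coe]
      linarith
  have hx_succ : Tendsto (fun j => x (φ j + 1)) atTop (𝓝 xstar) := by
    simpa using hlim.sub (hsteps.comp hφ.tendsto_atTop)
  have hy_lim : Tendsto (fun j => y (φ j)) atTop (𝓝 xstar) := by
    have hextra := tendsto_extrapolation_sub
      (fun k => (abs_of_nonneg (hw k).1).trans_le (hw k).2) hy hsteps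
    simpa using hlim.add (hextra.comp hφ.tendsto_atTop)
  have hstep_bdd : IsBoundedUnder (· ≤ ·) atTop (norm ∘ fun j => 1 / α (φ j)) :=
    isBoundedUnder_of ⟨1 / αmin, fun j => by
      have hαj := (hα (φ j)).1
      simpa [abs_of_pos (hαmin.trans_le hαj)] using one_div_le_one_div_of_le hαmin hαj⟩
  have hgrad_f := (hf.of_le one_le_two).continuous_gradient.tendsto xstar
  have hgrad_h := (hh.of_le one_le_two).continuous_gradient.tendsto xstar
  have hgrad_gap : Tendsto (fun j => gradient h (x (φ j + 1)) - gradient h (y (φ j))) atTop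
      (𝓝 0) := by
    simpa using (hgrad_h.comp hx_succ).sub (hgrad_h.comp hy_lim)
  have hp : Tendsto (fun j => -gradient f (y (φ j)) -
      (1 / α (φ j)) • (gradient h (x (φ j + 1)) - gradient h (y (φ j)))) atTop
      (𝓝 (-gradient f xstar)) := by
    simpa using (hgrad_f.comp hy_lim).neg.sub (hstep_bdd.smul_tendsto_zero hgrad_gap)
  have hstat : ∀ v, g xstar + ((⟪-gradient f xstar, v - xstar⟫ : ℝ) : EReal) ≤ g v := by
    refine fun v => subgradient_ineq_of_tendsto hg_lsc hx_succ hp ?_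
    filter_upwards [eventually_ge_atTop 1] with j hj
    have hk : 1 ≤ φ j := hj.trans hφ.le_apply
    exact subgradient_of_bregman_step hg_bot hg_convex
      ((hh.differentiable two_ne_zero) _) (hgfin _ hk) (hmin _ hk) v
  obtain ⟨v, hv⟩ := hg_proper
  refine ⟨fun htop => hv ?_, hstat⟩
  have hv_top := hstat v
  rwa [htop, EReal.top_add_coe, top_le_iff] at hv_top

/-- Subsequential convergence of the AA-BPG method: every cluster point `x*` of the
iterates is a stationary point, i.e. `−∇f(x*) ∈ ∂g(x*)`. -/
theorem aabpg_cluster_point_stationary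
    (n : ℕ) (hn : 1 ≤ n)
    (f h : EuclideanSpace ℝ (Fin n) → ℝ)
    (hf : ContDiff ℝ 2 f) (hh : ContDiff ℝ 2 h)
    (σ Rf : ℝ) (hσ : 0 < σ)
    (hstrong : ConvexOn ℝ Set.univ (fun x => h x - σ / 2 * ‖x‖ ^ 2))
    (hrel : ∀ x y : EuclideanSpace ℝ (Fin n),
      f x - f y - ⟪gradient f y, x - y⟫ ≤ Rf * bregman h x y)
    (g : EuclideanSpace ℝ (Fin n) → EReal)
    (hg_bot : ∀ x, g x ≠ ⊥) (hg_proper : ∃ x, g x ≠ ⊤)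
    (hg_lsc : LowerSemicontinuous g)
    (hg_convex : ∀ x y : EuclideanSpace ℝ (Fin n), ∀ t : ℝ, 0 ≤ t → t ≤ 1 →
      g (t • x + (1 - t) • y) ≤ (t : EReal) * g x + ((1 - t : ℝ) : EReal) * g y)
    (En : EuclideanSpace ℝ (Fin n) → EReal)
    (hEn : ∀ x, En x = (f x : EReal) + g x)
    (hbdd : ∃ m : ℝ, ∀ x, (m : EReal) ≤ En x)
    (c₀ wbar αmin αmax : ℝ)
    (hc₀ : 0 < c₀) (hwbar : 0 ≤ wbar) (hαmin : 0 < αmin) (hαminmax : αmin ≤ αmax)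
    (x y : ℕ → EuclideanSpace ℝ (Fin n)) (w α : ℕ → ℝ)
    (hx1 : x 1 = x 0) (hE0 : En (x 0) ≠ ⊤)
    (hw : ∀ k, w k ∈ Set.Icc 0 wbar) (hα : ∀ k, α k ∈ Set.Icc αmin αmax)
    (hy : ∀ k ≥ 1, y k = x k + w k • (x k - x (k - 1)))
    (hgfin : ∀ k ≥ 1, g (x (k + 1)) ≠ ⊤)
    (hmin : ∀ k ≥ 1, ∀ u : EuclideanSpace ℝ (Fin n),
      g (x (k + 1)) +
        ((⟪gradient f (y k), x (k + 1) - y k⟫ +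
          (1 / α k) * bregman h (x (k + 1)) (y k) : ℝ) : EReal) ≤
      g u + ((⟪gradient f (y k), u - y k⟫ + (1 / α k) * bregman h u (y k) : ℝ) : EReal))
    (hdec : ∀ k ≥ 1, ∃ Ek Ek1 : ℝ, En (x k) = (Ek : EReal) ∧ En (x (k + 1)) = (Ek1 : EReal) ∧
      Ek - Ek1 ≥ c₀ * ‖x k - x (k + 1)‖ ^ 2)
    (hsub : Bornology.IsBounded {u : EuclideanSpace ℝ (Fin n) | En u ≤ En (x 0)})
    (xstar : EuclideanSpace ℝ (Fin n)) (φ : ℕ → ℕ) (hφ : StrictMono φ)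
    (hlim : Filter.Tendsto (fun k => x (φ k)) Filter.atTop (nhds xstar)) :
    g xstar ≠ ⊤ ∧
      ∀ v : EuclideanSpace ℝ (Fin n),
        g xstar + ((⟪-gradient f xstar, v - xstar⟫ : ℝ) : EReal) ≤ g v :=
  aabpg_cluster_point_stationary_general n f h hf hh g hg_bot hg_proper hg_lsc hg_convex En hbdd c₀
    wbar αmin αmax hc₀ hαmin x y w α hw hα hy hgfin hmin hdec xstar φ hφ hlim
end

section
/- Let N ≥ 1 and work in ℝ^N (EuclideanSpace ℝ (Fin N)). Let d : Fin N → ℝ with d_j ≥ 0 for all j, let α > 0, let w, Ψ ∈ ℝ^N with Ψ_0 = 0 (the first coordinate of Ψ vanishes). Define G(Φ) = (1/2)·∑_j d_j·Φ_j², let P₁w be the vector w with its first coordinate replaced by 0, and define Φ⁺ coordinatewise by Φ⁺_j = (Ψ_j − α·(P₁w)_j)/(1 + α·d_j). Then Φ⁺_0 = 0, and for every Φ ∈ ℝ^N with Φ_0 = 0, G(Φ⁺) + ⟪w, Φ⁺ − Ψ⟫ + (1/(2α))·‖Φ⁺ − Ψ‖² ≤ G(Φ) + ⟪w, Φ − Ψ⟫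 + (1/(2α))·‖Φ − Ψ‖². That is, Φ⁺ = (I + αD)⁻¹(Ψ − α·P₁w) is the minimizer of the quadratic Bregman proximal subproblem over the mass-conservation constraint set {Φ : Φ_0 = 0}, where D = diag(d). -/
open RealInnerProductSpace

/-!
The objective is separable: it is a sum over coordinates of scalar quadratics
`d y² / 2 + w (y - ψ) + (y - ψ)² / (2α)`, and completing the square shows each is minimised at
`(ψ - α w) / (1 + α d)`. Off the first coordinate this is `Φ⁺_j`; on it, the constraint and
`Ψ_0 = (P₁w)_0 = 0` force both `Φ_0` and `Φ⁺_0` to vanish.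
-/

noncomputable def proxObjective (d α w ψ y : ℝ) : ℝ :=
  (1 / 2) * (d * y ^ 2) + w * (y - ψ) + (1 / (2 * α)) * (y - ψ) ^ 2

theorem proxObjective_sub_proxObjective_eq {d α : ℝ} (hα : α ≠ 0) (hdα : 1 + α * d ≠ 0)
    (w ψ y : ℝ) :
    proxObjective d α w ψ y - proxObjective d α w ψ ((ψ - α * w) / (1 + α * d)) =
      (1 + α * d) / (2 * α) * (y - (ψ - α * w) / (1 + α * d)) ^ 2 := by
  have hx : (1 + α * d) * ((ψ - α * w) / (1 + α * d)) = ψ - α * w := mul_div_cancel₀ _ hdα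
  generalize (ψ - α * w) / (1 + α * d) = x at hx ⊢
  unfold proxObjective
  field_simp
  linear_combination 2 * (y - x) * hx

theorem proxObjective_le {d α : ℝ} (hd : 0 ≤ d) (hα : 0 < α) (w ψ y : ℝ) :
    proxObjective d α w ψ ((ψ - α * w) / (1 + α * d)) ≤ proxObjective d α w ψ y := by
  have hdα : 0 < 1 + α * d := by positivity
  rw [← sub_nonneg, proxObjective_sub_proxObjective_eq hα.ne' hdα.ne']
  positivity

theorem EuclideanSpace.prox_objective_eq_sum_proxObjective {ι : Type*} [Fintype ι] (d : ι → ℝ) (α : ℝ)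
    (w Ψ Φ : EuclideanSpace ℝ ι) :
    (1 / 2) * ∑ j, d j * Φ j ^ 2 + ⟪w, Φ - Ψ⟫ + (1 / (2 * α)) * ‖Φ - Ψ‖ ^ 2 =
      ∑ j, proxObjective (d j) α (w j) (Ψ j) (Φ j) := by
  simp only [proxObjective, EuclideanSpace.norm_sq_eq, PiLp.inner_apply, PiLp.sub_apply,
    RCLike.inner_apply, conj_trivial, Real.norm_eq_abs, sq_abs, Finset.mul_sum,
    ← Finset.sum_add_distrib]
  exact Finset.sum_congr rfl fun j _ => by ring

/-- Closed form of the quadratic (P2) Bregman proximal subproblem for PFC models: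
`Φ⁺ = (I + αD)⁻¹(Ψ − α·P₁w)` solves
`min G(Φ) + ⟪w, Φ − Ψ⟫ + (1/(2α))‖Φ − Ψ‖²` subject to `Φ_0 = 0`. -/
theorem pfc_quadratic_prox_closed_form
    (N : ℕ) (hN : 0 < N)
    (d : Fin N → ℝ) (hd : ∀ j, 0 ≤ d j)
    (α : ℝ) (hα : 0 < α)
    (w Ψ : EuclideanSpace ℝ (Fin N))
    (hΨ : Ψ ⟨0, hN⟩ = 0)
    (G : EuclideanSpace ℝ (Fin N) → ℝ)
    (hG : ∀ Φ : EuclideanSpace ℝ (Fin N), G Φ = (1 / 2) * ∑ j, d j * Φ j ^ 2)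
    (P₁w : EuclideanSpace ℝ (Fin N))
    (hP₁w : ∀ j : Fin N, P₁w j = if j = ⟨0, hN⟩ then 0 else w j)
    (Φp : EuclideanSpace ℝ (Fin N))
    (hΦp : ∀ j : Fin N, Φp j = (Ψ j - α * P₁w j) / (1 + α * d j)) :
    Φp ⟨0, hN⟩ = 0 ∧
      ∀ Φ : EuclideanSpace ℝ (Fin N), Φ ⟨0, hN⟩ = 0 →
        G Φp + ⟪w, Φp - Ψ⟫ + (1 / (2 * α)) * ‖Φp - Ψ‖ ^ 2 ≤
          G Φ + ⟪w, Φ - Ψ⟫ + (1 / (2 * α)) * ‖Φ - Ψ‖ ^ 2 := by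
  have hΦp₀ : Φp ⟨0, hN⟩ = 0 := by simp [hΦp, hP₁w, hΨ]
  refine ⟨hΦp₀, fun Φ hΦ₀ => ?_⟩
  simp only [hG, EuclideanSpace.prox_objective_eq_sum_proxObjective]
  refine Finset.sum_le_sum fun j _ => ?_
  by_cases hj : j = ⟨0, hN⟩
  · rw [hj, hΦp₀, hΦ₀]
  · rw [hΦp, hP₁w, if_neg hj]
    exact proxObjective_le (hd j) hα _ _ _
end

section
/- Let N ≥ 1, let d : Fin N → ℝ with d_j ≥ 0 for all j, let a, b, α > 0, and let β ∈ ℝ^N. Define r : [0, ∞) → ℝ by r(p) = ∑_j β_j² / (α·d_j + a·p + b)². Then there exists a unique p* ≥ 0 such that r(p*) = p*. -/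
/-!
Every denominator `α d_j + a p + b` is positive and increasing in `p ≥ 0`, so `r` is continuous
and antitone on `[0, ∞)` with `r 0 ≥ 0`. An antitone map has at most one fixed point, and `r`
crosses the diagonal on `[0, r 0]` since `r (r 0) ≤ r 0`, so the intermediate value theorem
yields one.
-/

open Set Function

theorem AntitoneOn.eq_of_isFixedPt {α : Type*} [LinearOrder α] {g : α → α} {s : Set α}
    (hg : AntitoneOn g s) {p q : α} (hp : p ∈ s) (hq : q ∈ s)
    (hpg : IsFixedPt g p) (hqg : IsFixedPt g q) : p = q := by
  rcases le_total p q with hpq | hqp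
  · exact le_antisymm hpq (by simpa only [hpg.eq, hqg.eq] using hg hp hq hpq)
  · exact le_antisymm (by simpa only [hpg.eq, hqg.eq] using hg hq hp hqp) hqp

theorem IsPreconnected.exists_isFixedPt_of_antitoneOn {α : Type*} [LinearOrder α]
    [TopologicalSpace α] [OrderClosedTopology α] {g : α → α} {s : Set α} (hs : IsPreconnected s)
    (hcont : ContinuousOn g s) (hg : AntitoneOn g s) {c : α} (hc : c ∈ s) (hgc : g c ∈ s)
    (hcg : c ≤ g c) : ∃ p ∈ s, IsFixedPt g p :=
  (hs.intermediate_value₂ hc hgc continuousOn_id hcont hcg (hg hc hgc hcg)).imp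
    fun _ ⟨hp, hpg⟩ => ⟨hp, hpg.symm⟩

theorem existsUnique_isFixedPt_of_antitoneOn_Ici {α : Type*} [ConditionallyCompleteLinearOrder α]
    [DenselyOrdered α] [TopologicalSpace α] [OrderTopology α] {g : α → α} {c : α}
    (hcont : ContinuousOn g (Ici c)) (hg : AntitoneOn g (Ici c)) (hcg : c ≤ g c) :
    ∃! p, c ≤ p ∧ IsFixedPt g p := by
  obtain ⟨p, hp, hpg⟩ :=
    isPreconnected_Ici.exists_isFixedPt_of_antitoneOn hcont hg self_mem_Ici hcg hcg
  exact ⟨p, ⟨hp, hpg⟩, fun q ⟨hq, hqg⟩ => hg.eq_of_isFixedPt hq hp hqg hpg⟩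

section SumOfInverseSquares

variable {ι : Type*} {c d : ι → ℝ} {a b α : ℝ}

theorem mul_add_mul_add_pos (hd : ∀ j, 0 ≤ d j) (ha : 0 ≤ a) (hb : 0 < b) (hα : 0 ≤ α) {p : ℝ}
    (hp : 0 ≤ p) (j : ι) : 0 < α * d j + a * p + b := by
  have := mul_nonneg hα (hd j)
  have := mul_nonneg ha hp
  linarith

variable [Fintype ι]

theorem sum_div_sq_nonneg (p : ℝ) : 0 ≤ ∑ j, c j ^ 2 / (α * d j + a * p + b) ^ 2 :=
  Finset.sum_nonneg fun _ _ => by positivity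

theorem antitoneOn_sum_div_sq (hd : ∀ j, 0 ≤ d j) (ha : 0 ≤ a) (hb : 0 < b) (hα : 0 ≤ α) :
    AntitoneOn (fun p => ∑ j, c j ^ 2 / (α * d j + a * p + b) ^ 2) (Ici 0) := by
  intro p hp q hq hpq
  refine Finset.sum_le_sum fun j _ => ?_
  have hpos := mul_add_mul_add_pos hd ha hb hα hp j
  refine div_le_div_of_nonneg_left (sq_nonneg _) (pow_pos hpos 2) ?_
  exact pow_le_pow_left₀ hpos.le (by nlinarith) 2

theorem continuousOn_sum_div_sq (hd : ∀ j, 0 ≤ d j) (ha : 0 ≤ a) (hb : 0 < b) (hα : 0 ≤ α) :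
    ContinuousOn (fun p => ∑ j, c j ^ 2 / (α * d j + a * p + b) ^ 2) (Ici 0) :=
  continuousOn_finsetSum _ fun j _ =>
    continuousOn_const.div (by fun_prop) fun _ hp => pow_ne_zero 2 (mul_add_mul_add_pos hd ha hb hα hp j).ne'

end SumOfInverseSquares

theorem pfc_quartic_fixed_point_unique_general
    (N : ℕ)
    (d : Fin N → ℝ) (hd : ∀ j, 0 ≤ d j)
    (a b α : ℝ) (ha : 0 < a) (hb : 0 < b) (hα : 0 < α)
    (β : EuclideanSpace ℝ (Fin N))
    (r : ℝ → ℝ)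
    (hr : ∀ p : ℝ, 0 ≤ p → r p = ∑ j, β j ^ 2 / (α * d j + a * p + b) ^ 2) :
    ∃! p : ℝ, 0 ≤ p ∧ r p = p := by
  have hr' : EqOn (fun p => ∑ j, β j ^ 2 / (α * d j + a * p + b) ^ 2) r (Ici 0) :=
    fun p hp => (hr p hp).symm
  refine existsUnique_isFixedPt_of_antitoneOn_Ici
    ((continuousOn_sum_div_sq hd ha.le hb hα.le).congr hr'.symm)
    ((antitoneOn_sum_div_sq hd ha.le hb hα.le).congr hr') ?_
  rw [hr 0 le_rfl]
  exact sum_div_sq_nonneg 0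

/-- The fixed point equation `p = r(p) = ∑_j β_j²/(α d_j + a p + b)²` arising from the
quartic-kernel Bregman proximal subproblem has a unique nonnegative solution. -/
theorem pfc_quartic_fixed_point_unique
    (N : ℕ) (hN : 0 < N)
    (d : Fin N → ℝ) (hd : ∀ j, 0 ≤ d j)
    (a b α : ℝ) (ha : 0 < a) (hb : 0 < b) (hα : 0 < α)
    (β : EuclideanSpace ℝ (Fin N))
    (r : ℝ → ℝ)
    (hr : ∀ p : ℝ, 0 ≤ p → r p = ∑ j, β j ^ 2 / (α * d j + a * p + b) ^ 2) :
    ∃! p : ℝ, 0 ≤ p ∧ r p = p :=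
  pfc_quartic_fixed_point_unique_general N d hd a b α ha hb hα β r hr
end

section
/- Let N ≥ 1 and work in ℝ^N (EuclideanSpace ℝ (Fin N)). Let d : Fin N → ℝ with d_j ≥ 0 for all j, a, b, α > 0, and let w, Ψ ∈ ℝ^N with Ψ_0 = 0. Define h(Φ) = (a/4)‖Φ‖⁴ + (b/2)‖Φ‖² + 1 (so ∇h(Φ) = (a‖Φ‖² + b)•Φ), the Bregman distance D_h(Φ, Ψ) = h(Φ) − h(Ψ) − ⟪∇h(Ψ), Φ − Ψ⟫, G(Φ) = (1/2)·∑_j d_j·Φ_j², P₁w the vector w with first coordinate replaced by 0, and β = ∇h(Ψ) − α·P₁w. Let p* ≥ 0 satisfy p* = ∑_j β_j²/(α·d_j + a·p* + b)², and define Φ⁺ coordinatewise by Φ⁺_j = β_j/(α·d_j + a·p* + b). Then Φ⁺_0 = 0, ‖Φ⁺‖² = p*, and for every Φ ∈ ℝ^N with Φ_0 = 0, G(Φ⁺) + ⟪w, Φ⁺ − Ψ⟫ + (1/α)·D_h(Φ⁺, Ψ) ≤ G(Φ) + ⟪w, Φ − Ψ⟫ + (1/α)·D_h(Φ, Ψ).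 -/
/-!
Multiplying the objective by `α` and dropping the terms that do not depend on `Φ`, on the
subspace `Φ₀ = 0` it becomes `F(Φ) = ½∑ⱼ(αdⱼ + b)Φⱼ² + (a/4)‖Φ‖⁴ − ⟪β, Φ⟫`, since there
`⟪w, Φ⟫ = ⟪P₁w, Φ⟫`. With `p = ‖Φ⁺‖²`, the identity `(a/4)t² = (a/4)(t − p)² + (ap/2)t − (a/4)p²`
at `t = ‖Φ‖²` writes `F` as a nonnegative term vanishing at `Φ⁺` plus the separable quadratic
`∑ⱼ cⱼ(Φⱼ²/2 − Φ⁺ⱼΦⱼ)` with `cⱼ = αdⱼ + ap + b ≥ 0`, because `βⱼ = cⱼΦ⁺ⱼ`; that quadratic is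
minimized coordinatewise at `Φ⁺`.
-/

open RealInnerProductSpace

section InnerProductSpace

variable {E : Type*} [NormedAddCommGroup E] [InnerProductSpace ℝ E]

lemma mul_bregman_prox_objective_eq {α : ℝ} (hα : α ≠ 0) (G h : E → ℝ) (g w Φ Ψ : E) :
    α * (G Φ + ⟪w, Φ - Ψ⟫ + 1 / α * (h Φ - h Ψ - ⟪g, Φ - Ψ⟫)) =
      α * G Φ + h Φ - ⟪g - α • w, Φ⟫ + (⟪g - α • w, Ψ⟫ - h Ψ) := by
  simp only [inner_sub_left, inner_sub_right, real_inner_smul_left]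
  field_simp
  ring

end InnerProductSpace

section EuclideanSpace

variable {ι : Type*} [Fintype ι]

lemma EuclideanSpace.real_inner_eq_sum (x y : EuclideanSpace ℝ ι) :
    ⟪x, y⟫ = ∑ j, x j * y j := by
  simp [PiLp.inner_apply, mul_comm]

lemma EuclideanSpace.inner_eq_of_apply_eq_of_ne [DecidableEq ι] {u v x : EuclideanSpace ℝ ι}
    {i : ι} (huv : ∀ j, j ≠ i → u j = v j) (hx : x i = 0) : ⟪u, x⟫ = ⟪v, x⟫ := by
  simp only [EuclideanSpace.real_inner_eq_sum]
  refine Finset.sum_congr rfl fun j _ => ?_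
  rcases eq_or_ne j i with rfl | hj
  · simp [hx]
  · rw [huv j hj]

lemma sum_half_mul_sq_sub_mul_le (c x y : ι → ℝ) (hc : ∀ j, 0 ≤ c j) :
    ∑ j, (c j / 2 * y j ^ 2 - c j * y j * y j) ≤ ∑ j, (c j / 2 * x j ^ 2 - c j * y j * x j) :=
  Finset.sum_le_sum fun j _ => by nlinarith [mul_nonneg (hc j) (sq_nonneg (x j - y j))]

theorem quartic_objective_le_of_stationary (e : ι → ℝ) (he : ∀ j, 0 ≤ e j) {a : ℝ} (ha : 0 ≤ a)
    {β y : EuclideanSpace ℝ ι} (hy : ∀ j, β j = (e j + a * ‖y‖ ^ 2) * y j)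
    (x : EuclideanSpace ℝ ι) :
    1 / 2 * ∑ j, e j * y j ^ 2 + a / 4 * ‖y‖ ^ 4 - ⟪β, y⟫ ≤
      1 / 2 * ∑ j, e j * x j ^ 2 + a / 4 * ‖x‖ ^ 4 - ⟪β, x⟫ := by
  set p := ‖y‖ ^ 2
  set c := fun j => e j + a * p
  have split : ∀ z : EuclideanSpace ℝ ι,
      1 / 2 * ∑ j, e j * z j ^ 2 + a / 4 * ‖z‖ ^ 4 - ⟪β, z⟫ =
        a / 4 * (‖z‖ ^ 2 - p) ^ 2 - a / 4 * p ^ 2 +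
          ∑ j, (c j / 2 * z j ^ 2 - c j * y j * z j) := by
    intro z
    have hsum : ∑ j, (c j / 2 * z j ^ 2 - c j * y j * z j) =
        1 / 2 * ∑ j, e j * z j ^ 2 + a * p / 2 * ‖z‖ ^ 2 - ⟪β, z⟫ := by
      rw [EuclideanSpace.real_inner_eq_sum, EuclideanSpace.real_norm_sq_eq, Finset.mul_sum,
        Finset.mul_sum, ← Finset.sum_add_distrib, ← Finset.sum_sub_distrib]
      exact Finset.sum_congr rfl fun j _ => by rw [hy]; ring
    rw [hsum]
    ring
  have hc : ∀ j, 0 ≤ c j := fun j => add_nonneg (he j) (mul_nonneg ha (sq_nonneg _))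
  rw [split, split, sub_self]
  linarith [sum_half_mul_sq_sub_mul_le c x y hc, mul_nonneg ha (sq_nonneg (‖x‖ ^ 2 - p))]

end EuclideanSpace

/-- Closed form of the quartic (P4) Bregman proximal subproblem for PFC models:
with `h(Φ) = (a/4)‖Φ‖⁴ + (b/2)‖Φ‖² + 1`, `∇h(Ψ) = (a‖Ψ‖² + b)•Ψ`,
`β = ∇h(Ψ) − α·P₁w` and `p*` the fixed point of `p = ∑_j β_j²/(αd_j + ap + b)²`,
the vector `Φ⁺_j = β_j/(αd_j + ap* + b)` satisfies `Φ⁺_0 = 0`, `‖Φ⁺‖² = p*` and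
minimizes `G(Φ) + ⟪w, Φ − Ψ⟫ + (1/α)·D_h(Φ, Ψ)` over `{Φ : Φ_0 = 0}`. -/
theorem pfc_quartic_prox_closed_form
    (N : ℕ) (hN : 0 < N)
    (d : Fin N → ℝ) (hd : ∀ j, 0 ≤ d j)
    (a b α : ℝ) (ha : 0 < a) (hb : 0 < b) (hα : 0 < α)
    (w Ψ : EuclideanSpace ℝ (Fin N))
    (hΨ : Ψ ⟨0, hN⟩ = 0)
    (h : EuclideanSpace ℝ (Fin N) → ℝ)
    (hh : ∀ Φ : EuclideanSpace ℝ (Fin N), h Φ = a / 4 * ‖Φ‖ ^ 4 + b / 2 * ‖Φ‖ ^ 2 + 1)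
    (gradh : EuclideanSpace ℝ (Fin N) → EuclideanSpace ℝ (Fin N))
    (hgradh : ∀ Φ : EuclideanSpace ℝ (Fin N), gradh Φ = (a * ‖Φ‖ ^ 2 + b) • Φ)
    (Dh : EuclideanSpace ℝ (Fin N) → EuclideanSpace ℝ (Fin N) → ℝ)
    (hDh : ∀ Φ Ψ' : EuclideanSpace ℝ (Fin N), Dh Φ Ψ' = h Φ - h Ψ' - ⟪gradh Ψ', Φ - Ψ'⟫)
    (G : EuclideanSpace ℝ (Fin N) → ℝ)
    (hG : ∀ Φ : EuclideanSpace ℝ (Fin N), G Φ = (1 / 2) * ∑ j, d j * Φ j ^ 2)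
    (P₁w : EuclideanSpace ℝ (Fin N))
    (hP₁w : ∀ j : Fin N, P₁w j = if j = ⟨0, hN⟩ then 0 else w j)
    (β : EuclideanSpace ℝ (Fin N))
    (hβ : β = gradh Ψ - α • P₁w)
    (pstar : ℝ) (hpstar0 : 0 ≤ pstar)
    (hpstar : pstar = ∑ j, β j ^ 2 / (α * d j + a * pstar + b) ^ 2)
    (Φp : EuclideanSpace ℝ (Fin N))
    (hΦp : ∀ j : Fin N, Φp j = β j / (α * d j + a * pstar + b)) :
    Φp ⟨0, hN⟩ = 0 ∧ ‖Φp‖ ^ 2 = pstar ∧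
      ∀ Φ : EuclideanSpace ℝ (Fin N), Φ ⟨0, hN⟩ = 0 →
        G Φp + ⟪w, Φp - Ψ⟫ + (1 / α) * Dh Φp Ψ ≤
          G Φ + ⟪w, Φ - Ψ⟫ + (1 / α) * Dh Φ Ψ := by
  have hΦp0 : Φp ⟨0, hN⟩ = 0 := by simp [hΦp, hβ, hgradh, hP₁w, hΨ]
  have hnorm : ‖Φp‖ ^ 2 = pstar := by
    conv_rhs => rw [hpstar]
    simp_rw [EuclideanSpace.real_norm_sq_eq, hΦp, div_pow]
  have hstationary : ∀ j, β j = (α * d j + b + a * ‖Φp‖ ^ 2) * Φp j := fun j => by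
    have := hd j
    rw [hΦp, hnorm, add_right_comm, mul_div_cancel₀ _ (by positivity)]
  have hinner : ∀ Φ : EuclideanSpace ℝ (Fin N), Φ ⟨0, hN⟩ = 0 →
      ⟪gradh Ψ - α • w, Φ⟫ = ⟪β, Φ⟫ := fun Φ hΦ =>
    EuclideanSpace.inner_eq_of_apply_eq_of_ne (fun j hj => by simp [hβ, hP₁w, hj]) hΦ
  have hreduced : ∀ Φ : EuclideanSpace ℝ (Fin N), Φ ⟨0, hN⟩ = 0 →
      α * G Φ + h Φ - ⟪gradh Ψ - α • w, Φ⟫ =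
        1 / 2 * ∑ j, (α * d j + b) * Φ j ^ 2 + a / 4 * ‖Φ‖ ^ 4 - ⟪β, Φ⟫ + 1 := by
    intro Φ hΦ
    simp only [hG, hh, hinner Φ hΦ, EuclideanSpace.real_norm_sq_eq, add_mul,
      Finset.sum_add_distrib, mul_assoc, ← Finset.mul_sum]
    ring
  refine ⟨hΦp0, hnorm, fun Φ hΦ => ?_⟩
  rw [← mul_le_mul_iff_right₀ hα, hDh, hDh, mul_bregman_prox_objective_eq hα.ne',
    mul_bregman_prox_objective_eq hα.ne', hreduced Φp hΦp0, hreduced Φ hΦ]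
  have hcoef : ∀ j, 0 ≤ α * d j + b := fun j => by have := hd j; positivity
  linarith [quartic_objective_le_of_stationary _ hcoef ha.le hstationary Φ]
end

section
/- Let N ≥ 1 and work in ℝ^N (EuclideanSpace ℝ (Fin N)). Let A be a symmetric positive semidefinite N×N real matrix, ε, κ ∈ ℝ, and define the discretized phase field crystal energy E₀(u) = (1/2)·⟪u, Au⟫ + (1/N)·∑_j ((ε/2)·u_j² − (κ/3)·u_j³ + (1/4)·u_j⁴). Then: (i) E₀ is bounded below on ℝ^N; (ii) for every u⁰ ∈ ℝ^N, the sublevel set {u : E₀(u) ≤ E₀(u⁰)} is compact; and (iii) for any fixed v ∈ ℝ^N, the set {u : E₀(u) ≤ E₀(u⁰) and ⟪v, u⟫ = 0} is compact. -/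
open RealInnerProductSpace

/-- The discretized PFC energy `E₀(u) = (1/2)⟪u, Au⟫ + (1/N)∑_j((ε/2)u_j² − (κ/3)u_j³ + (1/4)u_j⁴)`
is bounded below, has compact sublevel sets, and the sublevel sets restricted to the
mass-conservation hyperplane `⟪v, u⟫ = 0` are compact. -/
theorem pfc_energy_coercive
    (N : ℕ) (hN : 0 < N)
    (A : Matrix (Fin N) (Fin N) ℝ) (hsymm : A.IsSymm) (hpsd : A.PosSemidef)
    (ε κ : ℝ)
    (E₀ : EuclideanSpace ℝ (Fin N) → ℝ)
    (hE₀ : ∀ u : EuclideanSpace ℝ (Fin N),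
      E₀ u = (1 / 2) * ⟪u, (WithLp.toLp 2 (A.mulVec u) : EuclideanSpace ℝ (Fin N))⟫ +
        (1 / (N : ℝ)) * ∑ j, (ε / 2 * u j ^ 2 - κ / 3 * u j ^ 3 + 1 / 4 * u j ^ 4))
    (u₀ v : EuclideanSpace ℝ (Fin N)) :
    BddBelow (Set.range E₀) ∧
      IsCompact {u : EuclideanSpace ℝ (Fin N) | E₀ u ≤ E₀ u₀} ∧
      IsCompact {u : EuclideanSpace ℝ (Fin N) | E₀ u ≤ E₀ u₀ ∧ ⟪v, u⟫ = 0} := by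
  set C : ℝ := 2 * (2 * (κ / 3) ^ 2 - (ε / 2 - 1)) ^ 2 with hC
  have hpoly : ∀ x : ℝ, x ^ 2 - C ≤ ε / 2 * x ^ 2 - κ / 3 * x ^ 3 + 1 / 4 * x ^ 4 := by
    intro x
    nlinarith [sq_nonneg (x ^ 2 - 4 * (κ / 3) * x),
      sq_nonneg (x ^ 2 - 4 * (2 * (κ / 3) ^ 2 - (ε / 2 - 1)))]
  -- quadratic term nonnegative
  have hquad : ∀ u : EuclideanSpace ℝ (Fin N),
      0 ≤ ⟪u, (WithLp.toLp 2 (A.mulVec u) : EuclideanSpace ℝ (Fin N))⟫ := by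
    intro u
    have h := hpsd.dotProduct_mulVec_nonneg u.ofLp
    simpa [PiLp.inner_apply, dotProduct, RCLike.inner_apply, mul_comm] using h
  have hnormsq : ∀ u : EuclideanSpace ℝ (Fin N), ∑ j, u j ^ 2 = ‖u‖ ^ 2 := by
    intro u
    rw [← real_inner_self_eq_norm_sq]
    rw [PiLp.inner_apply]
    simp [sq]
  have hNpos : (0 : ℝ) < N := by exact_mod_cast hN
  have hlb : ∀ u : EuclideanSpace ℝ (Fin N), ‖u‖ ^ 2 / N - C ≤ E₀ u := by
    intro u
    rw [hE₀ u]
    have hsum : ∑ j, (u j ^ 2 - C) ≤ ∑ j, (ε / 2 * u j ^ 2 - κ / 3 * u j ^ 3 + 1 / 4 * u j ^ 4) :=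
      Finset.sum_le_sum fun j _ => hpoly (u j)
    rw [Finset.sum_sub_distrib, Finset.sum_const, Finset.card_univ, Fintype.card_fin,
      hnormsq u] at hsum
    have h2 : (1 / (N : ℝ)) * (‖u‖ ^ 2 - N * C) ≤
        (1 / (N : ℝ)) * ∑ j, (ε / 2 * u j ^ 2 - κ / 3 * u j ^ 3 + 1 / 4 * u j ^ 4) := by
      apply mul_le_mul_of_nonneg_left _ (by positivity)
      simpa [nsmul_eq_mul] using hsum
    have h3 := hquad u
    have : (1 / (N : ℝ)) * (‖u‖ ^ 2 - N * C) = ‖u‖ ^ 2 / N - C := by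
      field_simp
    linarith
  -- continuity
  have hcont : Continuous E₀ := by
    have : E₀ = fun u => (1 / 2) * ⟪u, (Matrix.toEuclideanLin A) u⟫ +
        (1 / (N : ℝ)) * ∑ j, (ε / 2 * u j ^ 2 - κ / 3 * u j ^ 3 + 1 / 4 * u j ^ 4) := by
      funext u
      rw [hE₀ u]
      rfl
    rw [this]
    have hA : Continuous fun u : EuclideanSpace ℝ (Fin N) => (Matrix.toEuclideanLin A) u :=
      (Matrix.toEuclideanLin A).continuous_of_finiteDimensional
    have h1 : Continuous fun u : EuclideanSpace ℝ (Fin N) => ⟪u, (Matrix.toEuclideanLin A) u⟫ :=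
      Continuous.inner continuous_id hA
    have hproj : ∀ j : Fin N, Continuous fun u : EuclideanSpace ℝ (Fin N) => u j :=
      fun j => (EuclideanSpace.proj j).continuous
    have h2 : Continuous fun u : EuclideanSpace ℝ (Fin N) =>
        ∑ j, (ε / 2 * u j ^ 2 - κ / 3 * u j ^ 3 + 1 / 4 * u j ^ 4) := by
      apply continuous_finset_sum
      intro j _
      have := hproj j
      fun_prop
    fun_prop
  -- compactness of sublevel set
  have hclosed : IsClosed {u : EuclideanSpace ℝ (Fin N) | E₀ u ≤ E₀ u₀} :=
    isClosed_le hcont continuous_const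
  have hbdd : Bornology.IsBounded {u : EuclideanSpace ℝ (Fin N) | E₀ u ≤ E₀ u₀} := by
    apply Bornology.IsBounded.subset (Metric.isBounded_closedBall
      (x := (0 : EuclideanSpace ℝ (Fin N))) (r := Real.sqrt (N * (E₀ u₀ + C) ⊔ 0)))
    intro u hu
    simp only [Set.mem_setOf_eq] at hu
    have h1 := hlb u
    have h2 : ‖u‖ ^ 2 ≤ N * (E₀ u₀ + C) ⊔ 0 := by
      have : ‖u‖ ^ 2 / N ≤ E₀ u₀ + C := by linarith
      have := (div_le_iff₀ hNpos).mp this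
      calc ‖u‖ ^ 2 ≤ (E₀ u₀ + C) * N := this
        _ ≤ N * (E₀ u₀ + C) ⊔ 0 := le_sup_of_le_left (by ring_nf; exact le_refl _)
    simp only [Metric.mem_closedBall, dist_zero_right]
    calc ‖u‖ = Real.sqrt (‖u‖ ^ 2) := by rw [Real.sqrt_sq (norm_nonneg u)]
      _ ≤ _ := Real.sqrt_le_sqrt h2
  have hcpt : IsCompact {u : EuclideanSpace ℝ (Fin N) | E₀ u ≤ E₀ u₀} :=
    Metric.isCompact_of_isClosed_isBounded hclosed hbdd
  refine ⟨⟨E₀ u₀ - (E₀ u₀ + C) ⊔ 0 - 1, ?_⟩, hcpt, ?_⟩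
  · rintro x ⟨u, rfl⟩
    have h1 := hlb u
    have : -C ≤ E₀ u := by
      have : 0 ≤ ‖u‖ ^ 2 / N := by positivity
      linarith
    have h2 : -C ≤ E₀ u := this
    have : (0:ℝ) ≤ (E₀ u₀ + C) ⊔ 0 := le_sup_right
    nlinarith [le_sup_left (a := E₀ u₀ + C) (b := (0:ℝ))]
  · apply hcpt.of_isClosed_subset
    · exact IsClosed.inter hclosed
        (isClosed_eq (Continuous.inner continuous_const continuous_id) continuous_const)
    · intro u hu; exact hu.1
end

section
/- Let N ≥ 1 and work in ℝ^N (EuclideanSpace ℝ (Fin N)). Let ε, κ ∈ ℝ and define the bulk energy F(u) = (1/N)·∑_j ((ε/2)·u_j² − (κ/3)·u_j³ + (1/4)·u_j⁴), and the quartic kernel h(u) = (a/4)‖u‖⁴ + (b/2)‖u‖² + 1 with a, b > 0. Then F is relatively smooth with respect to h: there exists R > 0 such that for all u, v ∈ ℝ^N, R·((a‖u‖² + b)·‖v‖² + 2a·⟪u, v⟫²) ≥ (1/N)·∑_j (ε − 2κ·u_j + 3·u_j²)·v_j², i.e. R·∇²h(u) − ∇²F(u) is positive semidefinite for every u. -/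
/-!
Since `-2κx ≤ κ² + x²` and `u_j² ≤ ‖u‖²`, every diagonal coefficient of `∇²F(u)` is at most
`|ε| + κ² + 4‖u‖²`, so `N · ∇²F(u)[v, v] ≤ (|ε| + κ² + 4‖u‖²)‖v‖²`. On the other side `∇²h(u)[v, v] ≥ (a‖u‖² + b)‖v‖²`,
and `C + 4s ≤ (C / b + 4 / a)(a s + b)` for `s ≥ 0`; as `1 / N ≤ 1`, `R = (|ε| + κ²) / b + 4 / a`
works for every dimension.
-/

open RealInnerProductSpace

lemma EuclideanSpace.sq_apply_le_norm_sq {ι : Type*} [Fintype ι] (u : EuclideanSpace ℝ ι) (j : ι) :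
    u j ^ 2 ≤ ‖u‖ ^ 2 := by
  rw [← sq_abs, ← Real.norm_eq_abs]
  exact pow_le_pow_left₀ (norm_nonneg _) (PiLp.norm_apply_le u j) 2

lemma EuclideanSpace.sum_mul_sq_le {ι : Type*} [Fintype ι] {c : ι → ℝ} {M : ℝ}
    (hc : ∀ j, c j ≤ M) (v : EuclideanSpace ℝ ι) :
    ∑ j, c j * v j ^ 2 ≤ M * ‖v‖ ^ 2 := by
  rw [EuclideanSpace.real_norm_sq_eq, Finset.mul_sum]
  exact Finset.sum_le_sum fun j _ => mul_le_mul_of_nonneg_right (hc j) (sq_nonneg _)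

lemma bulk_hessian_coeff_le (ε κ x : ℝ) :
    ε - 2 * κ * x + 3 * x ^ 2 ≤ |ε| + κ ^ 2 + 4 * x ^ 2 := by
  nlinarith [le_abs_self ε, sq_nonneg (κ + x)]

lemma bulk_hessian_le {ι : Type*} [Fintype ι] (ε κ : ℝ) (u v : EuclideanSpace ℝ ι) :
    ∑ j, (ε - 2 * κ * u j + 3 * u j ^ 2) * v j ^ 2 ≤ (|ε| + κ ^ 2 + 4 * ‖u‖ ^ 2) * ‖v‖ ^ 2 :=
  EuclideanSpace.sum_mul_sq_le (fun j => (bulk_hessian_coeff_le ε κ (u j)).trans <| by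
    linarith [EuclideanSpace.sq_apply_le_norm_sq u j]) v

lemma add_four_mul_le_div_add_div_mul {C a b s : ℝ} (hC : 0 ≤ C) (ha : 0 < a) (hb : 0 < b) (hs : 0 ≤ s) :
    C + 4 * s ≤ (C / b + 4 / a) * (a * s + b) := by
  have expand : (C / b + 4 / a) * (a * s + b) = C + 4 * s + (C / b * a * s + 4 / a * b) := by
    field_simp
    ring
  rw [expand]
  exact le_add_of_nonneg_right (by positivity)

theorem pfc_bulk_relative_smooth_quartic_general
    (N : ℕ)
    (ε κ a b : ℝ) (ha : 0 < a) (hb : 0 < b) :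
    ∃ R : ℝ, 0 < R ∧
      ∀ u v : EuclideanSpace ℝ (Fin N),
        (1 / (N : ℝ)) * ∑ j, (ε - 2 * κ * u j + 3 * u j ^ 2) * v j ^ 2 ≤
          R * ((a * ‖u‖ ^ 2 + b) * ‖v‖ ^ 2 + 2 * a * ⟪u, v⟫ ^ 2) := by
  refine ⟨(|ε| + κ ^ 2) / b + 4 / a, by positivity, fun u v => ?_⟩
  have hN : 1 / (N : ℝ) ≤ 1 := by simpa using Nat.cast_inv_le_one (α := ℝ) N
  calc (1 / (N : ℝ)) * ∑ j, (ε - 2 * κ * u j + 3 * u j ^ 2) * v j ^ 2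
      ≤ (1 / (N : ℝ)) * ((|ε| + κ ^ 2 + 4 * ‖u‖ ^ 2) * ‖v‖ ^ 2) := by
        gcongr; exact bulk_hessian_le ε κ u v
    _ ≤ (|ε| + κ ^ 2 + 4 * ‖u‖ ^ 2) * ‖v‖ ^ 2 := mul_le_of_le_one_left (by positivity) hN
    _ ≤ ((|ε| + κ ^ 2) / b + 4 / a) * (a * ‖u‖ ^ 2 + b) * ‖v‖ ^ 2 := by
        gcongr; exact add_four_mul_le_div_add_div_mul (by positivity) ha hb (by positivity)
    _ ≤ ((|ε| + κ ^ 2) / b + 4 / a) * ((a * ‖u‖ ^ 2 + b) * ‖v‖ ^ 2 + 2 * a * ⟪u, v⟫ ^ 2) := by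
        rw [mul_assoc]; gcongr; exact le_add_of_nonneg_right (by positivity)

/-- The discretized PFC bulk energy `F(u) = (1/N)∑_j((ε/2)u_j² − (κ/3)u_j³ + (1/4)u_j⁴)` is
relatively smooth with respect to the quartic kernel `h(u) = (a/4)‖u‖⁴ + (b/2)‖u‖² + 1`:
there is `R > 0` with `R·∇²h(u) − ∇²F(u)` positive semidefinite for all `u`. -/
theorem pfc_bulk_relative_smooth_quartic
    (N : ℕ) (hN : 0 < N)
    (ε κ a b : ℝ) (ha : 0 < a) (hb : 0 < b) :
    ∃ R : ℝ, 0 < R ∧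
      ∀ u v : EuclideanSpace ℝ (Fin N),
        (1 / (N : ℝ)) * ∑ j, (ε - 2 * κ * u j + 3 * u j ^ 2) * v j ^ 2 ≤
          R * ((a * ‖u‖ ^ 2 + b) * ‖v‖ ^ 2 + 2 * a * ⟪u, v⟫ ^ 2) :=
  pfc_bulk_relative_smooth_quartic_general N ε κ a b ha hb
end

section
/- Let n ≥ 1 and work in ℝ^n (EuclideanSpace ℝ (Fin n)). Let J be a symmetric n×n real matrix, g ∈ ℝ^n with g ≠ 0, constants c₁ ≥ 1, c₂ > 0, 0 < τ < 1, and λ ∈ ℝ such that ⟪Jv, v⟫ ≥ λ·‖v‖² for all v. Let μ ∈ ℝ satisfy μ ≥ −c₁·min(0, λ) + c₂·‖g‖, and let d ∈ ℝ^n satisfy ‖(J + μI)d + g‖ ≤ τ·‖g‖ (d is an inexact regularized Newton direction computed by PCG with residual tolerance τ‖g‖). Then ‖d‖ ≤ (τ + 1)/c₂. -/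
open RealInnerProductSpace

/-! A shifted-coercivity estimate: `J + μI` satisfies `⟪(J + μI)v, v⟫ ≥ (λ + μ)‖v‖²` and the choice of
`μ` forces `λ + μ ≥ c₂‖g‖`, so Cauchy–Schwarz gives `c₂‖g‖‖d‖ ≤ ‖(J + μI)d‖ ≤ (τ + 1)‖g‖`. -/

theorem mul_norm_le_norm_of_mul_norm_sq_le_inner {E : Type*} [NormedAddCommGroup E]
    [InnerProductSpace ℝ E] {m : ℝ} {x y : E} (h : m * ‖x‖ ^ 2 ≤ ⟪y, x⟫) :
    m * ‖x‖ ≤ ‖y‖ := by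
  rcases (norm_nonneg x).eq_or_lt with hx | hx
  · rw [← hx, mul_zero]
    exact norm_nonneg y
  · have : m * ‖x‖ * ‖x‖ ≤ ‖y‖ * ‖x‖ := by
      rw [mul_assoc, ← sq]
      exact h.trans (real_inner_le_norm y x)
    exact le_of_mul_le_mul_right this hx

theorem add_mul_norm_sq_le_inner_add_smul {E : Type*} [NormedAddCommGroup E]
    [InnerProductSpace ℝ E] {J : E →ₗ[ℝ] E} {lam : ℝ} (hlam : ∀ v, lam * ‖v‖ ^ 2 ≤ ⟪J v, v⟫)
    (μ : ℝ) (v : E) : (lam + μ) * ‖v‖ ^ 2 ≤ ⟪J v + μ • v, v⟫ := by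
  rw [inner_add_left, real_inner_smul_left, real_inner_self_eq_norm_sq, add_mul]
  exact add_le_add_left (hlam v) _

theorem le_add_of_neg_mul_min_zero_add_le {c₁ lam a μ : ℝ} (hc₁ : 1 ≤ c₁)
    (hμ : -c₁ * min 0 lam + a ≤ μ) : a ≤ lam + μ := by
  rcases le_total 0 lam with h | h
  · rw [min_eq_left h] at hμ
    linarith
  · rw [min_eq_right h] at hμ
    nlinarith

theorem newton_pcg_direction_bound_general
    (n : ℕ)
    (J : EuclideanSpace ℝ (Fin n) →ₗ[ℝ] EuclideanSpace ℝ (Fin n))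
    (g : EuclideanSpace ℝ (Fin n)) (hg : g ≠ 0)
    (c₁ c₂ τ lam μ : ℝ)
    (hc₁ : 1 ≤ c₁) (hc₂ : 0 < c₂)
    (hlam : ∀ v : EuclideanSpace ℝ (Fin n), lam * ‖v‖ ^ 2 ≤ ⟪J v, v⟫)
    (hμ : -c₁ * min 0 lam + c₂ * ‖g‖ ≤ μ)
    (d : EuclideanSpace ℝ (Fin n))
    (hres : ‖J d + μ • d + g‖ ≤ τ * ‖g‖) :
    ‖d‖ ≤ (τ + 1) / c₂ := by
  have hg_pos : 0 < ‖g‖ := norm_pos_iff.mpr hg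
  have hshift : c₂ * ‖g‖ ≤ lam + μ := le_add_of_neg_mul_min_zero_add_le hc₁ hμ
  have hlower : (lam + μ) * ‖d‖ ≤ ‖J d + μ • d‖ :=
    mul_norm_le_norm_of_mul_norm_sq_le_inner (add_mul_norm_sq_le_inner_add_smul hlam μ d)
  have hupper : ‖J d + μ • d‖ ≤ (τ + 1) * ‖g‖ := by
    calc ‖J d + μ • d‖ = ‖(J d + μ • d + g) - g‖ := by rw [add_sub_cancel_right]
      _ ≤ ‖J d + μ • d + g‖ + ‖g‖ := norm_sub_le _ _
      _ ≤ (τ + 1) * ‖g‖ := by linarith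
  have hbound : c₂ * ‖d‖ * ‖g‖ ≤ (τ + 1) * ‖g‖ := by
    calc c₂ * ‖d‖ * ‖g‖ = c₂ * ‖g‖ * ‖d‖ := by ring
      _ ≤ (lam + μ) * ‖d‖ := mul_le_mul_of_nonneg_right hshift (norm_nonneg d)
      _ ≤ (τ + 1) * ‖g‖ := hlower.trans hupper
  rw [le_div_iff₀ hc₂, mul_comm]
  exact le_of_mul_le_mul_right hbound hg_pos

/-- Norm bound on the inexact regularized Newton direction: if `J` is symmetric with
`⟪Jv, v⟫ ≥ λ‖v‖²`, `μ ≥ −c₁·min(0, λ) + c₂‖g‖` and `‖(J + μI)d + g‖ ≤ τ‖g‖`,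
then `‖d‖ ≤ (τ + 1)/c₂`. -/
theorem newton_pcg_direction_bound
    (n : ℕ) (hn : 1 ≤ n)
    (J : EuclideanSpace ℝ (Fin n) →ₗ[ℝ] EuclideanSpace ℝ (Fin n))
    (hJsymm : ∀ u v : EuclideanSpace ℝ (Fin n), ⟪J u, v⟫ = ⟪u, J v⟫)
    (g : EuclideanSpace ℝ (Fin n)) (hg : g ≠ 0)
    (c₁ c₂ τ lam μ : ℝ)
    (hc₁ : 1 ≤ c₁) (hc₂ : 0 < c₂) (hτ0 : 0 < τ) (hτ1 : τ < 1)
    (hlam : ∀ v : EuclideanSpace ℝ (Fin n), lam * ‖v‖ ^ 2 ≤ ⟪J v, v⟫)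
    (hμ : -c₁ * min 0 lam + c₂ * ‖g‖ ≤ μ)
    (d : EuclideanSpace ℝ (Fin n))
    (hres : ‖J d + μ • d + g‖ ≤ τ * ‖g‖) :
    ‖d‖ ≤ (τ + 1) / c₂ :=
  newton_pcg_direction_bound_general n J g hg c₁ c₂ τ lam μ hc₁ hc₂ hlam hμ d hres
end

section
/- Let n ≥ 1 and let E : ℝ^n → ℝ (ℝ^n = EuclideanSpace ℝ (Fin n)) be continuously differentiable and bounded below. Let ν ∈ (0, 1) and constants λ̄ > 0, d̄ > 0, M > 0. Let (U^k), (d_k), (t_k) be sequences with t_k ∈ (0, 1] and U^{k+1} = U^k + t_k•d_k, and write g_k = ∇E(U^k). Suppose for every k: (i) −⟪g_k, d_k⟫ ≥ ‖g_k‖²/λ̄; (ii) ‖d_k‖ ≤ d̄; (iii) E(U^{k+1}) ≤ E(U^k) + ν·t_k·⟪g_k, d_k⟫; and (iv) t_k ≥ min(2(1 − ν)·‖g_k‖²/(λ̄·M·d̄²), 1). Then lim_{k→∞} ‖∇E(U^k)‖ = 0. -/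
/-!
The Armijo condition, the descent bound and the lower bound on the step size give a per-step
decrease `E(Uᵏ) - E(Uᵏ⁺¹) ≥ (ν/λ̄) · min(c‖gₖ‖², 1) · ‖gₖ‖²` with `c = 2(1-ν)/(λ̄ M d̄²) > 0`.
So `E(Uᵏ)` decreases and, being bounded below, converges; hence the decreases tend to zero.
The forcing function `x ↦ min(c x², 1) x²` is monotone on `[0, ∞)` and positive for `x > 0`,
so `‖gₖ‖ → 0`.
-/

open RealInnerProductSpace Filter Topology Set

lemma tendsto_zero_of_nonneg_of_le_sub_succ {f b : ℕ → ℝ} (hf : BddBelow (range f))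
    (hb0 : ∀ k, 0 ≤ b k) (hb : ∀ k, b k ≤ f k - f (k + 1)) :
    Tendsto b atTop (𝓝 0) := by
  have hanti : Antitone f := antitone_nat_of_succ_le fun k => by linarith [hb0 k, hb k]
  have hlim : Tendsto f atTop (𝓝 (⨅ k, f k)) := tendsto_atTop_ciInf hanti hf
  have hdiff : Tendsto (fun k => f k - f (k + 1)) atTop (𝓝 0) := by
    simpa using hlim.sub (hlim.comp (tendsto_add_atTop_nat 1))
  exact squeeze_zero hb0 hb hdiff

lemma tendsto_zero_of_monotoneOn_comp {φ : ℝ → ℝ} {a : ℕ → ℝ} (hφ : MonotoneOn φ (Ici 0))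
    (hφpos : ∀ x, 0 < x → 0 < φ x) (ha : ∀ k, 0 ≤ a k)
    (hφa : Tendsto (fun k => φ (a k)) atTop (𝓝 0)) :
    Tendsto a atTop (𝓝 0) := by
  rw [Metric.tendsto_atTop] at hφa ⊢
  intro ε hε
  obtain ⟨N, hN⟩ := hφa (φ ε) (hφpos ε hε)
  refine ⟨N, fun k hk => ?_⟩
  have hlt : φ (a k) < φ ε := (le_abs_self _).trans_lt (by simpa using hN k hk)
  have hak : a k < ε := by
    by_contra! hle
    exact hlt.not_ge (hφ (mem_Ici.2 hε.le) (mem_Ici.2 (ha k)) hle)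
  simpa [Real.dist_eq, abs_of_nonneg (ha k)] using hak

lemma monotoneOn_const_mul_min_mul_sq {a c : ℝ} (ha : 0 ≤ a) (hc : 0 ≤ c) :
    MonotoneOn (fun x : ℝ => a * (min (c * x ^ 2) 1 * x ^ 2)) (Ici 0) := by
  intro x hx y _ hxy
  have hx : 0 ≤ x := hx
  dsimp only
  gcongr

lemma armijo_sufficient_decrease {ν L c t s e e' g : ℝ} (hν : 0 ≤ ν) (hL : 0 < L)
    (hc : 0 ≤ c) (ht : min (c * g ^ 2) 1 ≤ t) (hdesc : -s ≥ g ^ 2 / L) (harmijo : e' ≤ e + ν * t * s) :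
    ν / L * (min (c * g ^ 2) 1 * g ^ 2) ≤ e - e' := by
  have hg : 0 ≤ g ^ 2 / L := by positivity
  have ht0 : 0 ≤ t := (le_min (by positivity) zero_le_one).trans ht
  calc ν / L * (min (c * g ^ 2) 1 * g ^ 2) = ν * (min (c * g ^ 2) 1 * (g ^ 2 / L)) := by ring
    _ ≤ ν * (t * (g ^ 2 / L)) := by gcongr
    _ ≤ ν * (t * -s) := by gcongr
    _ ≤ e - e' := by linarith

theorem newton_pcg_gradient_convergence_general
    (n : ℕ)
    (En : EuclideanSpace ℝ (Fin n) → ℝ)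
    (hbdd : BddBelow (Set.range En))
    (ν lambar dbar M : ℝ)
    (hν0 : 0 < ν) (hν1 : ν < 1) (hlambar : 0 < lambar) (hdbar : 0 < dbar) (hM : 0 < M)
    (U d : ℕ → EuclideanSpace ℝ (Fin n)) (t : ℕ → ℝ)
    (hdesc : ∀ k, -⟪gradient En (U k), d k⟫ ≥ ‖gradient En (U k)‖ ^ 2 / lambar)
    (harmijo : ∀ k, En (U (k + 1)) ≤ En (U k) + ν * t k * ⟪gradient En (U k), d k⟫)
    (htlow : ∀ k, t k ≥
      min (2 * (1 - ν) * ‖gradient En (U k)‖ ^ 2 / (lambar * M * dbar ^ 2)) 1) :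
    Filter.Tendsto (fun k => ‖gradient En (U k)‖) Filter.atTop (nhds 0) := by
  set c := 2 * (1 - ν) / (lambar * M * dbar ^ 2)
  have hc : 0 < c := div_pos (by linarith) (by positivity)
  set φ : ℝ → ℝ := fun x => ν / lambar * (min (c * x ^ 2) 1 * x ^ 2)
  have hφpos : ∀ x, 0 < x → 0 < φ x := fun x hx => by positivity
  have hdecrease : ∀ k, φ ‖gradient En (U k)‖ ≤ En (U k) - En (U (k + 1)) := fun k =>
    armijo_sufficient_decrease hν0.le hlambar hc.le
      (by simpa only [c, div_mul_eq_mul_div] using htlow k) (hdesc k) (harmijo k)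
  have hφ_tendsto : Tendsto (fun k => φ ‖gradient En (U k)‖) atTop (𝓝 0) :=
    tendsto_zero_of_nonneg_of_le_sub_succ (hbdd.mono (range_comp_subset_range U En))
      (fun k => by positivity) hdecrease
  exact tendsto_zero_of_monotoneOn_comp
    (monotoneOn_const_mul_min_mul_sq (div_pos hν0 hlambar).le hc.le) hφpos
    (fun k => norm_nonneg _) hφ_tendsto

/-- Gradient convergence of the regularized Newton–PCG method: under the descent bound,
direction norm bound, Armijo condition, and step size lower bound, the gradients of
the bounded-below objective tend to zero. -/
theorem newton_pcg_gradient_convergence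
    (n : ℕ) (hn : 1 ≤ n)
    (En : EuclideanSpace ℝ (Fin n) → ℝ)
    (hEn : ContDiff ℝ 1 En)
    (hbdd : BddBelow (Set.range En))
    (ν lambar dbar M : ℝ)
    (hν0 : 0 < ν) (hν1 : ν < 1) (hlambar : 0 < lambar) (hdbar : 0 < dbar) (hM : 0 < M)
    (U d : ℕ → EuclideanSpace ℝ (Fin n)) (t : ℕ → ℝ)
    (ht : ∀ k, t k ∈ Set.Ioc (0 : ℝ) 1)
    (hupd : ∀ k, U (k + 1) = U k + t k • d k)
    (hdesc : ∀ k, -⟪gradient En (U k), d k⟫ ≥ ‖gradient En (U k)‖ ^ 2 / lambar)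
    (hdnorm : ∀ k, ‖d k‖ ≤ dbar)
    (harmijo : ∀ k, En (U (k + 1)) ≤ En (U k) + ν * t k * ⟪gradient En (U k), d k⟫)
    (htlow : ∀ k, t k ≥
      min (2 * (1 - ν) * ‖gradient En (U k)‖ ^ 2 / (lambar * M * dbar ^ 2)) 1) :
    Filter.Tendsto (fun k => ‖gradient En (U k)‖) Filter.atTop (nhds 0) :=
  newton_pcg_gradient_convergence_general n En hbdd ν lambar dbar M hν0 hν1 hlambar hdbar hM U d t
    hdesc harmijo htlow
end
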